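/- arXiv:1706.06063 — 5 statements merged into one kernel-verified Lean document; each statement's English description precedes it below -/
import Mathlib

section
/- Let V be a finite-dimensional vector space over F₂ with a nondegenerate alternating bilinear form B, let q be a quadratic refinement of B, let v ∈ V, and let q' be the quadratic refinement q'(w) = q(w) + B(v,w). Then the unique functions f_q and f_{q'} on Sp(V) (characterized by having coboundary c_q ∪ c_q, resp. c_{q'} ∪ c_{q'}, and restricting on O(q), resp. O(q'), to σ ↦ dim_{F₂} V^σ mod 2) satisfy, for every σ ∈ Sp(V): f_{q'}(σ) = f_q(σ) + B(c_q(σ), σ(v)) + B(v, c_q(σ)) + B(v, σ(v)). -/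
/-- The symplectic group of a bilinear form `B`, as a subtype of linear automorphisms. -/
abbrev SympGrp {V : Type*} [AddCommGroup V] [Module (ZMod 2) V]
    (B : V →ₗ[ZMod 2] V →ₗ[ZMod 2] ZMod 2) :=
  {σ : V ≃ₗ[ZMod 2] V // ∀ u w : V, B (σ u) (σ w) = B u w}

/-- The `F₂`-dimension of the fixed subspace `V^σ` of a linear automorphism `σ`. -/
noncomputable def fixedRank {V : Type*} [AddCommGroup V] [Module (ZMod 2) V]
    (σ : V ≃ₗ[ZMod 2] V) : ℕ :=
  Module.finrank (ZMod 2) ↥(LinearMap.ker (σ.toLinearMap - LinearMap.id))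

namespace Stmt1Aux

variable {V : Type*} [AddCommGroup V] [Module (ZMod 2) V]
  (B : V →ₗ[ZMod 2] V →ₗ[ZMod 2] ZMod 2)

lemma z2 (x : ZMod 2) : x + x = 0 := by revert x; decide

lemma zsq (x : ZMod 2) : x * x = x := by revert x; decide

lemma zcases (x : ZMod 2) : x = 0 ∨ x = 1 := by revert x; decide

lemma addself (x : V) : x + x = 0 := by
  have : ((2 : ZMod 2)) • x = 0 := by simp [show (2:ZMod 2) = 0 from rfl]
  rwa [two_smul] at this

lemma negself (x : V) : -x = x := by
  rw [neg_eq_iff_add_eq_zero]; exact addself x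

lemma Bsym (hAlt : ∀ v : V, B v v = 0) (u w : V) : B u w = B w u := by
  have h := hAlt (u + w)
  simp only [map_add, LinearMap.add_apply, hAlt] at h
  rcases zcases (B u w) with h1 | h1 <;> rcases zcases (B w u) with h2 | h2 <;>
      rw [h1, h2] <;> rw [h1, h2] at h <;> simp_all

lemma lself (hAlt : ∀ v : V, B v v = 0) (w : V) (x : V) :
    ((LinearMap.id : V →ₗ[ZMod 2] V) + (B w).smulRight w) (((LinearMap.id : V →ₗ[ZMod 2] V) + (B w).smulRight w) x) = x := by
  simp only [LinearMap.add_apply, LinearMap.id_apply, LinearMap.smulRight_apply, map_add,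
    map_smul, smul_eq_mul, hAlt, mul_zero, add_zero, zero_smul]
  rw [add_assoc, addself, add_zero]

/-- the transvection along `w` -/
def tv (hAlt : ∀ v : V, B v v = 0) (w : V) : V ≃ₗ[ZMod 2] V :=
  LinearEquiv.ofLinear
    ((LinearMap.id : V →ₗ[ZMod 2] V) + (B w).smulRight w)
    ((LinearMap.id : V →ₗ[ZMod 2] V) + (B w).smulRight w)
    (by ext x; exact lself B hAlt w x)
    (by ext x; exact lself B hAlt w x)

section tvsec
variable (hAlt : ∀ v : V, B v v = 0)

lemma tv_apply (w x : V) : tv B hAlt w x = x + B w x • w := rfl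

lemma tv_tv (w x : V) : tv B hAlt w (tv B hAlt w x) = x := lself B hAlt w x

lemma tv_symm_apply (w x : V) : (tv B hAlt w).symm x = tv B hAlt w x := by
  apply (tv B hAlt w).injective
  rw [LinearEquiv.apply_symm_apply, tv_tv]

lemma tv_symp (w u x : V) : B (tv B hAlt w u) (tv B hAlt w x) = B u x := by
  rw [tv_apply, tv_apply]
  simp only [map_add, map_smul, LinearMap.add_apply, LinearMap.smul_apply, smul_eq_mul, hAlt,
    mul_zero, add_zero]
  rw [mul_comm (B w x) (B u w), add_assoc, Bsym B hAlt w u, z2, add_zero]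

lemma symp_trans {σ τ : V ≃ₗ[ZMod 2] V} (hσ : ∀ u w, B (σ u) (σ w) = B u w)
    (hτ : ∀ u w, B (τ u) (τ w) = B u w) :
    ∀ u w, B ((τ.trans σ) u) ((τ.trans σ) w) = B u w := by
  intro u w
  simp only [LinearEquiv.trans_apply, hσ, hτ]

lemma symp_symm {σ : V ≃ₗ[ZMod 2] V} (hσ : ∀ u w, B (σ u) (σ w) = B u w) :
    ∀ u w, B (σ.symm u) (σ.symm w) = B u w := by
  intro u w
  rw [← hσ (σ.symm u) (σ.symm w), LinearEquiv.apply_symm_apply, LinearEquiv.apply_symm_apply]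

end tvsec

section q
variable (q : V → ZMod 2)

lemma zmove3 (a b c d : ZMod 2) (h : a + b + c = d) : a = d + b + c := by revert a b c d; decide
lemma zeq (a b : ZMod 2) (h : a + b = 0) : a = b := by revert a b; decide
lemma zne1 (a : ZMod 2) (h : ¬ a = 1) : a = 0 := by revert a; decide
lemma zne0 (a : ZMod 2) (h : ¬ a = 0) : a = 1 := by revert a; decide

lemma q0 (hq : ∀ u w : V, q (u + w) + q u + q w = B u w) : q 0 = 0 := by
  have h := hq 0 0
  simp only [add_zero, map_zero, LinearMap.zero_apply] at h
  rcases zcases (q 0) with h1 | h1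
  · exact h1
  · rw [h1] at h; exact absurd h (by decide)

lemma qadd (hq : ∀ u w : V, q (u + w) + q u + q w = B u w) (x y : V) :
    q (x + y) = B x y + q x + q y :=
  zmove3 _ _ _ _ (hq x y)

lemma qsmul (hq : ∀ u w : V, q (u + w) + q u + q w = B u w) (s : ZMod 2) (w : V) :
    q (s • w) = s * q w := by
  rcases zcases s with h | h <;> subst h
  · simpa using q0 B q hq
  · simp

lemma q_tv (hq : ∀ u w : V, q (u + w) + q u + q w = B u w) (hAlt : ∀ v : V, B v v = 0) (w x : V) :
    q (tv B hAlt w x) = q x + B w x * (q w + B x w) := by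
  rw [tv_apply, qadd B q hq, map_smul, qsmul B q hq, smul_eq_mul]
  ring

lemma tvO (hq : ∀ u w : V, q (u + w) + q u + q w = B u w) (hAlt : ∀ v : V, B v v = 0)
    (w : V) (hw : q w = 1) (x : V) :
    q (tv B hAlt w x) = q x := by
  rw [q_tv B q hq hAlt, hw, Bsym B hAlt x w]
  rcases zcases (B w x) with h | h <;> rw [h] <;> ring_nf
  all_goals simp [show (2:ZMod 2) = 0 from rfl]

lemma tvO' (hq : ∀ u w : V, q (u + w) + q u + q w = B u w) (hAlt : ∀ v : V, B v v = 0)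
    (v w : V) (hw : q w + B v w = 1) (x : V) :
    q (tv B hAlt w x) + B v (tv B hAlt w x) = q x + B v x := by
  have h1 : B v (tv B hAlt w x) = B v x + B w x * B v w := by
    rw [tv_apply]; simp [map_add, map_smul, smul_eq_mul]
  rw [q_tv B q hq hAlt, h1, Bsym B hAlt x w]
  have hsq := zsq (B w x)
  have htwo : (2 : ZMod 2) = 0 := rfl
  linear_combination (B w x) * hw + hsq + (B w x) * htwo

end q

section nondeg

lemma zeqV (x y : V) (h : x + y = 0) : x = y := by
  rw [← add_zero x, ← addself y, ← add_assoc, h, zero_add]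

lemma Buniq (hAlt : ∀ v : V, B v v = 0) (hNondeg : ∀ v : V, (∀ w : V, B v w = 0) → v = 0)
    (x y : V) (h : ∀ w, B w x = B w y) : x = y := by
  apply zeqV
  apply hNondeg
  intro w
  rw [Bsym B hAlt (x + y) w]
  simp only [map_add, LinearMap.add_apply, h w, z2]

variable (hAlt : ∀ v : V, B v v = 0) (hNondeg : ∀ v : V, (∀ w : V, B v w = 0) → v = 0)
  (q : V → ZMod 2) (hq : ∀ u w : V, q (u + w) + q u + q w = B u w)
  (c : (V ≃ₗ[ZMod 2] V) → V)
  (hc : ∀ σ : V ≃ₗ[ZMod 2] V, (∀ u w, B (σ u) (σ w) = B u w) →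
      ∀ w : V, B w (c σ) = q (σ.symm w) + q w)

include hAlt hNondeg hq hc

lemma c_tv (w : V) : c (tv B hAlt w) = (q w + 1) • w := by
  apply Buniq B hAlt hNondeg
  intro x
  rw [hc (tv B hAlt w) (fun u z => tv_symp B hAlt w u z) x, tv_symm_apply,
    q_tv B q hq hAlt, map_smul, smul_eq_mul, Bsym B hAlt x w]
  have hsq := zsq (B w x)
  have htwo : (2 : ZMod 2) = 0 := rfl
  linear_combination (q x) * htwo + hsq

lemma c_one : c (LinearEquiv.refl (ZMod 2) V) = 0 := by
  apply Buniq B hAlt hNondeg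
  intro x
  rw [hc (LinearEquiv.refl (ZMod 2) V) (fun u z => rfl) x]
  simp [z2]

lemma c_cocycle (σ τ : V ≃ₗ[ZMod 2] V) (hσ : ∀ u w, B (σ u) (σ w) = B u w)
    (hτ : ∀ u w, B (τ u) (τ w) = B u w) :
    c (τ.trans σ) = c σ + σ (c τ) := by
  apply Buniq B hAlt hNondeg
  intro x
  rw [hc (τ.trans σ) (symp_trans B hσ hτ) x]
  have h1 : B x (c σ + σ (c τ)) = B x (c σ) + B x (σ (c τ)) := by simp [map_add]
  have h2 : B x (σ (c τ)) = B (σ.symm x) (c τ) := by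
    rw [← hσ (σ.symm x) (c τ), LinearEquiv.apply_symm_apply]
  rw [h1, h2, hc σ hσ x, hc τ hτ (σ.symm x)]
  have h3 : (τ.trans σ).symm x = τ.symm (σ.symm x) := rfl
  rw [h3]
  have htwo : (2 : ZMod 2) = 0 := rfl
  linear_combination (- q (σ.symm x)) * htwo

lemma c'_eq (v : V) (c' : (V ≃ₗ[ZMod 2] V) → V)
    (hc' : ∀ σ : V ≃ₗ[ZMod 2] V, (∀ u w, B (σ u) (σ w) = B u w) →
      ∀ w : V, B w (c' σ) = (q (σ.symm w) + B v (σ.symm w)) + (q w + B v w))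
    (σ : V ≃ₗ[ZMod 2] V) (hσ : ∀ u w, B (σ u) (σ w) = B u w) :
    c' σ = c σ + v + σ v := by
  apply Buniq B hAlt hNondeg
  intro x
  rw [hc' σ hσ x]
  have h1 : B x (c σ + v + σ v) = B x (c σ) + B x v + B x (σ v) := by simp [map_add]
  have h2 : B v (σ.symm x) = B x (σ v) := by
    rw [← hσ v (σ.symm x), LinearEquiv.apply_symm_apply, Bsym B hAlt (σ v) x]
  rw [h1, h2, hc σ hσ x, Bsym B hAlt x v]
  ring

end nondeg

section rk

lemma memK (e : V ≃ₗ[ZMod 2] V) (x : V) :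
    x ∈ LinearMap.ker (e.toLinearMap - LinearMap.id) ↔ e x = x := by
  simp [LinearMap.mem_ker, LinearMap.sub_apply, sub_eq_zero]

lemma tv_conj (hAlt : ∀ v : V, B v v = 0) (σ : V ≃ₗ[ZMod 2] V)
    (hσ : ∀ u w, B (σ u) (σ w) = B u w) (w : V) :
    tv B hAlt (σ w) = (σ.symm.trans ((tv B hAlt w).trans σ)) := by
  apply LinearEquiv.toLinearMap_injective
  apply LinearMap.ext
  intro x
  simp only [LinearEquiv.coe_coe, LinearEquiv.trans_apply]
  rw [tv_apply, tv_apply, map_add, map_smul, LinearEquiv.apply_symm_apply]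
  congr 2
  rw [← hσ w (σ.symm x), LinearEquiv.apply_symm_apply]

variable [FiniteDimensional (ZMod 2) V]

lemma step1 (hAlt : ∀ v : V, B v v = 0) (σ : V ≃ₗ[ZMod 2] V)
    (hσ : ∀ u w, B (σ u) (σ w) = B u w) (u : V) (hu : B u (σ u) = 1) :
    fixedRank σ + 1 ≤ fixedRank (σ.trans (tv B hAlt (σ u + u))) := by
  set w := σ u + u with hw
  have hBwfix : ∀ x, σ x = x → B w x = 0 := by
    intro x hx
    rw [hw, map_add, LinearMap.add_apply]
    have : B (σ u) x = B u x := by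
      conv_lhs => rw [← hx]
      exact hσ u x
    rw [this, Bsym B hAlt u x, z2]
  have hle : LinearMap.ker (σ.toLinearMap - LinearMap.id) ≤
      LinearMap.ker ((σ.trans (tv B hAlt w)).toLinearMap - LinearMap.id) := by
    intro x hx
    rw [memK] at hx ⊢
    have : (σ.trans (tv B hAlt w)) x = tv B hAlt w x := by
      simp only [LinearEquiv.trans_apply, hx]
    rw [this, tv_apply, hBwfix x hx, zero_smul, add_zero]
  have hσuu : σ u ≠ u := by
    intro h
    rw [h, hAlt] at hu
    exact absurd hu (by decide)
  have huK : u ∉ LinearMap.ker (σ.toLinearMap - LinearMap.id) := by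
    rw [memK]; exact hσuu
  have huK' : u ∈ LinearMap.ker ((σ.trans (tv B hAlt w)).toLinearMap - LinearMap.id) := by
    rw [memK]
    have h1 : B w (σ u) = 1 := by
      rw [hw, map_add, LinearMap.add_apply, hAlt, zero_add, Bsym B hAlt u (σ u)] at *
      exact hu
    simp only [LinearEquiv.trans_apply]
    rw [tv_apply, h1, one_smul, hw, ← add_assoc, addself, zero_add]
  have hlt : LinearMap.ker (σ.toLinearMap - LinearMap.id) <
      LinearMap.ker ((σ.trans (tv B hAlt w)).toLinearMap - LinearMap.id) :=
    lt_of_le_of_ne hle (fun h => huK (h ▸ huK'))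
  exact Nat.succ_le_of_lt (Submodule.finrank_lt_finrank_of_lt hlt)

lemma rank_mono (σ τ : V ≃ₗ[ZMod 2] V)
    (h : LinearMap.ker (σ.toLinearMap - LinearMap.id) ≤
      LinearMap.ker (τ.toLinearMap - LinearMap.id)) :
    fixedRank σ ≤ fixedRank τ :=
  Submodule.finrank_mono h

lemma eq_refl_of_rank (σ : V ≃ₗ[ZMod 2] V)
    (h : Module.finrank (ZMod 2) V ≤ fixedRank σ) :
    σ = LinearEquiv.refl (ZMod 2) V := by
  have h2 : fixedRank σ ≤ Module.finrank (ZMod 2) V :=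
    Submodule.finrank_le _
  have h3 : LinearMap.ker (σ.toLinearMap - LinearMap.id) = ⊤ :=
    Submodule.eq_top_of_finrank_eq (le_antisymm h2 h)
  apply LinearEquiv.toLinearMap_injective
  apply LinearMap.ext
  intro x
  have : x ∈ LinearMap.ker (σ.toLinearMap - LinearMap.id) := h3 ▸ Submodule.mem_top
  rw [memK] at this
  simpa using this

end rk

lemma trans_ex (hAlt : ∀ v : V, B v v = 0) (hNondeg : ∀ v : V, (∀ w : V, B v w = 0) → v = 0)
    (a b : V) (ha : a ≠ 0) (hb : b ≠ 0) :
    ∃ σ : V ≃ₗ[ZMod 2] V, (∀ u w, B (σ u) (σ w) = B u w) ∧ σ a = b := by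
  by_cases hab : a = b
  · exact ⟨LinearEquiv.refl (ZMod 2) V, fun u w => rfl, hab⟩
  have hz : ∃ z, B a z = 1 ∧ B b z = 1 := by
    have h1 : ∃ z, B a z = 1 := by
      by_contra h
      push_neg at h
      exact ha (hNondeg a (fun w => zne1 _ (h w)))
    have h2 : ∃ z, B b z = 1 := by
      by_contra h
      push_neg at h
      exact hb (hNondeg b (fun w => zne1 _ (h w)))
    obtain ⟨z₁, hz₁⟩ := h1
    obtain ⟨z₂, hz₂⟩ := h2
    by_cases hb₁ : B b z₁ = 1
    · exact ⟨z₁, hz₁, hb₁⟩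
    by_cases ha₂ : B a z₂ = 1
    · exact ⟨z₂, ha₂, hz₂⟩
    refine ⟨z₁ + z₂, ?_, ?_⟩
    · rw [map_add, hz₁, zne1 _ ha₂, add_zero]
    · rw [map_add, zne1 _ hb₁, hz₂, zero_add]
  by_cases hBab : B a b = 1
  · refine ⟨tv B hAlt (a + b), (fun u w => tv_symp B hAlt _ u w), ?_⟩
    rw [tv_apply, map_add, LinearMap.add_apply, hAlt, zero_add, Bsym B hAlt b a, hBab,
      one_smul, ← add_assoc, addself, zero_add]
  obtain ⟨z, hz1, hz2⟩ := hz
  refine ⟨(tv B hAlt (a + z)).trans (tv B hAlt (z + b)),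
    symp_trans B (fun u w => tv_symp B hAlt _ u w) (fun u w => tv_symp B hAlt _ u w), ?_⟩
  have e1 : tv B hAlt (a + z) a = z := by
    rw [tv_apply, map_add, LinearMap.add_apply, hAlt, zero_add, Bsym B hAlt z a, hz1,
      one_smul, ← add_assoc, addself, zero_add]
  have e2 : tv B hAlt (z + b) z = b := by
    rw [tv_apply, map_add, LinearMap.add_apply, hAlt, zero_add]
    rw [hz2, one_smul, ← add_assoc, addself, zero_add]
  simp only [LinearEquiv.trans_apply, e1, e2]

def Dfun (v : V) (c : (V ≃ₗ[ZMod 2] V) → V)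
    (f f' : SympGrp B → ZMod 2) (σ : SympGrp B) : ZMod 2 :=
  f' σ + f σ + B (c σ.1) (σ.1 v) + B v (c σ.1) + B v (σ.1 v)

lemma Dmul
    (hAlt : ∀ v : V, B v v = 0) (hNondeg : ∀ v : V, (∀ w : V, B v w = 0) → v = 0)
    (q : V → ZMod 2) (hq : ∀ u w : V, q (u + w) + q u + q w = B u w)
    (v : V) (c c' : (V ≃ₗ[ZMod 2] V) → V)
    (hc : ∀ σ : V ≃ₗ[ZMod 2] V, (∀ u w, B (σ u) (σ w) = B u w) →
      ∀ w : V, B w (c σ) = q (σ.symm w) + q w)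
    (hc' : ∀ σ : V ≃ₗ[ZMod 2] V, (∀ u w, B (σ u) (σ w) = B u w) →
      ∀ w : V, B w (c' σ) = (q (σ.symm w) + B v (σ.symm w)) + (q w + B v w))
    (f f' : SympGrp B → ZMod 2)
    (hf₁ : ∀ σ τ ρ : SympGrp B, ρ.1 = τ.1.trans σ.1 →
      f ρ + f σ + f τ = B (c σ.1) (σ.1 (c τ.1)))
    (hf'₁ : ∀ σ τ ρ : SympGrp B, ρ.1 = τ.1.trans σ.1 →
      f' ρ + f' σ + f' τ = B (c' σ.1) (σ.1 (c' τ.1)))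
    (σ τ ρ : SympGrp B) (h : ρ.1 = τ.1.trans σ.1) :
    Dfun B v c f f' ρ = Dfun B v c f f' σ + Dfun B v c f f' τ := by
  have hfρ : f ρ = B (c σ.1) (σ.1 (c τ.1)) + f σ + f τ := zmove3 _ _ _ _ (hf₁ σ τ ρ h)
  have hf'ρ : f' ρ = B (c' σ.1) (σ.1 (c' τ.1)) + f' σ + f' τ := zmove3 _ _ _ _ (hf'₁ σ τ ρ h)
  have hcρ : c ρ.1 = c σ.1 + σ.1 (c τ.1) := by
    rw [h]; exact c_cocycle B hAlt hNondeg q hq c hc σ.1 τ.1 σ.2 τ.2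
  have hρv : ρ.1 v = σ.1 (τ.1 v) := by rw [h]; rfl
  have hc'σ : c' σ.1 = c σ.1 + v + σ.1 v := c'_eq B hAlt hNondeg q hq c hc v c' hc' σ.1 σ.2
  have hc'τ : c' τ.1 = c τ.1 + v + τ.1 v := c'_eq B hAlt hNondeg q hq c hc v c' hc' τ.1 τ.2
  simp only [Dfun, hfρ, hf'ρ, hcρ, hρv, hc'σ, hc'τ]
  simp only [map_add, LinearMap.add_apply, σ.2, τ.2, hAlt]
  ring_nf
  simp [show (2:ZMod 2) = 0 from rfl, show (3:ZMod 2) = 1 from rfl, z2]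

end Stmt1Aux


/-- change of quadratic refinement formula. For `q' = q + B(v,·)`, the unique
functions `f_q` and `f_{q'}` (with coboundaries `c_q ∪ c_q` resp. `c_{q'} ∪ c_{q'}` and
restricting to the Dickson homomorphism on `O(q)` resp. `O(q')`) satisfy
`f_{q'}(σ) = f_q(σ) + B(c_q σ, σ v) + B(v, c_q σ) + B(v, σ v)`. -/
theorem stmt1 (V : Type*) [AddCommGroup V] [Module (ZMod 2) V]
    [FiniteDimensional (ZMod 2) V]
    (B : V →ₗ[ZMod 2] V →ₗ[ZMod 2] ZMod 2)
    (hAlt : ∀ v : V, B v v = 0)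
    (hNondeg : ∀ v : V, (∀ w : V, B v w = 0) → v = 0)
    (q : V → ZMod 2)
    (hq : ∀ u w : V, q (u + w) + q u + q w = B u w)
    (v : V)
    (c c' : (V ≃ₗ[ZMod 2] V) → V)
    -- `c` is the cocycle attached to `q`
    (hc : ∀ σ : V ≃ₗ[ZMod 2] V, (∀ u w, B (σ u) (σ w) = B u w) →
      ∀ w : V, B w (c σ) = q (σ.symm w) + q w)
    -- `c'` is the cocycle attached to `q' = q + B(v,·)`
    (hc' : ∀ σ : V ≃ₗ[ZMod 2] V, (∀ u w, B (σ u) (σ w) = B u w) →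
      ∀ w : V, B w (c' σ) = (q (σ.symm w) + B v (σ.symm w)) + (q w + B v w))
    (f f' : SympGrp B → ZMod 2)
    -- the coboundary of `f` is `c_q ∪ c_q`
    (hf₁ : ∀ σ τ ρ : SympGrp B, ρ.1 = τ.1.trans σ.1 →
      f ρ + f σ + f τ = B (c σ.1) (σ.1 (c τ.1)))
    -- `f` restricts on `O(q)` to the Dickson homomorphism `σ ↦ dim V^σ mod 2`
    (hf₂ : ∀ σ : SympGrp B, (∀ x : V, q (σ.1 x) = q x) →
      f σ = (fixedRank σ.1 : ZMod 2))
    -- the coboundary of `f'` is `c_{q'} ∪ c_{q'}`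
    (hf'₁ : ∀ σ τ ρ : SympGrp B, ρ.1 = τ.1.trans σ.1 →
      f' ρ + f' σ + f' τ = B (c' σ.1) (σ.1 (c' τ.1)))
    -- `f'` restricts on `O(q')` to the Dickson homomorphism
    (hf'₂ : ∀ σ : SympGrp B, (∀ x : V, q (σ.1 x) + B v (σ.1 x) = q x + B v x) →
      f' σ = (fixedRank σ.1 : ZMod 2)) :
    ∀ σ : SympGrp B,
      f' σ = f σ + B (c σ.1) (σ.1 v) + B v (c σ.1) + B v (σ.1 v) := by
  classical
  have zmove5 : ∀ a b x y z : ZMod 2, a + b + x + y + z = 0 → a = b + x + y + z := by decide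
  suffices hall : ∀ σ : SympGrp B, Stmt1Aux.Dfun B v c f f' σ = 0 by
    intro σ
    exact zmove5 _ _ _ _ _ (hall σ)
  have Dmul' : ∀ σ τ ρ : SympGrp B, ρ.1 = τ.1.trans σ.1 →
      Stmt1Aux.Dfun B v c f f' ρ = Stmt1Aux.Dfun B v c f f' σ + Stmt1Aux.Dfun B v c f f' τ :=
    Stmt1Aux.Dmul B hAlt hNondeg q hq v c c' hc hc' f f' hf₁ hf'₁
  -- the identity element
  have Done : Stmt1Aux.Dfun B v c f f' ⟨LinearEquiv.refl (ZMod 2) V, fun u w => rfl⟩ = 0 := by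
    have h := Dmul' ⟨LinearEquiv.refl (ZMod 2) V, fun u w => rfl⟩
      ⟨LinearEquiv.refl (ZMod 2) V, fun u w => rfl⟩
      ⟨LinearEquiv.refl (ZMod 2) V, fun u w => rfl⟩ (LinearEquiv.trans_refl _).symm
    revert h
    generalize Stmt1Aux.Dfun B v c f f' ⟨LinearEquiv.refl (ZMod 2) V, fun u w => rfl⟩ = a
    revert a; decide
  -- inverses
  have Dinv : ∀ α : SympGrp B,
      Stmt1Aux.Dfun B v c f f' ⟨α.1.symm, Stmt1Aux.symp_symm B α.2⟩ =
        Stmt1Aux.Dfun B v c f f' α := by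
    intro α
    have h := Dmul' α ⟨α.1.symm, Stmt1Aux.symp_symm B α.2⟩
      ⟨LinearEquiv.refl (ZMod 2) V, fun u w => rfl⟩ (α.1.symm_trans_self).symm
    rw [Done] at h
    exact (Stmt1Aux.zeq _ _ h.symm).symm
  -- conjugation of transvections
  have Dconj : ∀ (α : SympGrp B) (w : V),
      Stmt1Aux.Dfun B v c f f'
          ⟨Stmt1Aux.tv B hAlt (α.1 w), fun u x => Stmt1Aux.tv_symp B hAlt _ u x⟩ =
        Stmt1Aux.Dfun B v c f f'
          ⟨Stmt1Aux.tv B hAlt w, fun u x => Stmt1Aux.tv_symp B hAlt w u x⟩ := by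
    intro α w
    have hX : Stmt1Aux.Dfun B v c f f'
        ⟨(Stmt1Aux.tv B hAlt w).trans α.1,
          Stmt1Aux.symp_trans B α.2 (fun u x => Stmt1Aux.tv_symp B hAlt w u x)⟩ =
        Stmt1Aux.Dfun B v c f f' α +
        Stmt1Aux.Dfun B v c f f'
          ⟨Stmt1Aux.tv B hAlt w, fun u x => Stmt1Aux.tv_symp B hAlt w u x⟩ :=
      Dmul' α ⟨Stmt1Aux.tv B hAlt w, fun u x => Stmt1Aux.tv_symp B hAlt w u x⟩ _ rfl
    have hY : Stmt1Aux.Dfun B v c f f'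
        ⟨Stmt1Aux.tv B hAlt (α.1 w), fun u x => Stmt1Aux.tv_symp B hAlt _ u x⟩ =
        Stmt1Aux.Dfun B v c f f'
          ⟨(Stmt1Aux.tv B hAlt w).trans α.1,
            Stmt1Aux.symp_trans B α.2 (fun u x => Stmt1Aux.tv_symp B hAlt w u x)⟩ +
        Stmt1Aux.Dfun B v c f f' ⟨α.1.symm, Stmt1Aux.symp_symm B α.2⟩ := by
      apply Dmul'
      exact Stmt1Aux.tv_conj B hAlt α.1 α.2 w
    rw [hY, hX, Dinv]
    generalize Stmt1Aux.Dfun B v c f f' α = a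
    generalize Stmt1Aux.Dfun B v c f f'
      ⟨Stmt1Aux.tv B hAlt w, fun u x => Stmt1Aux.tv_symp B hAlt w u x⟩ = b
    revert a b; decide
  -- constancy on transvections
  have Dtv_const : ∀ w w' : V, w ≠ 0 → w' ≠ 0 →
      Stmt1Aux.Dfun B v c f f'
          ⟨Stmt1Aux.tv B hAlt w, fun u x => Stmt1Aux.tv_symp B hAlt w u x⟩ =
        Stmt1Aux.Dfun B v c f f'
          ⟨Stmt1Aux.tv B hAlt w', fun u x => Stmt1Aux.tv_symp B hAlt w' u x⟩ := by
    intro w w' hw hw'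
    obtain ⟨e, he, hmap⟩ := Stmt1Aux.trans_ex B hAlt hNondeg w w' hw hw'
    have := Dconj ⟨e, he⟩ w
    rw [show (⟨e, he⟩ : SympGrp B).1 = e from rfl] at this
    rw [← this]
    congr 1
    exact Subtype.ext (by rw [hmap])
  have symp_tv : ∀ w : V, ∀ u x : V,
      B (Stmt1Aux.tv B hAlt w u) (Stmt1Aux.tv B hAlt w x) = B u x :=
    fun w u x => Stmt1Aux.tv_symp B hAlt w u x
  -- main induction: transvections generate the symplectic group
  have main : (∀ w : V, w ≠ 0 →
        Stmt1Aux.Dfun B v c f f' ⟨Stmt1Aux.tv B hAlt w, symp_tv w⟩ = 0) →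
      ∀ σ : SympGrp B, Stmt1Aux.Dfun B v c f f' σ = 0 := by
    intro hwit
    suffices key : ∀ k : ℕ, ∀ σ : SympGrp B,
        Module.finrank (ZMod 2) V ≤ fixedRank σ.1 + k → Stmt1Aux.Dfun B v c f f' σ = 0 by
      intro σ
      exact key (Module.finrank (ZMod 2) V) σ (Nat.le_add_left _ _)
    intro k
    induction k with
    | zero =>
      intro σ hσ
      have h1 : σ.1 = LinearEquiv.refl (ZMod 2) V :=
        Stmt1Aux.eq_refl_of_rank σ.1 (by simpa using hσ)
      have h2 : σ = (⟨LinearEquiv.refl (ZMod 2) V, fun u w => rfl⟩ : SympGrp B) :=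
        Subtype.ext h1
      rw [h2]; exact Done
    | succ k ih =>
      intro σ hσ
      by_cases hid : σ.1 = LinearEquiv.refl (ZMod 2) V
      · have h2 : σ = (⟨LinearEquiv.refl (ZMod 2) V, fun u w => rfl⟩ : SympGrp B) :=
          Subtype.ext hid
        rw [h2]; exact Done
      -- a helper performing the case-1 step
      have case1 : ∀ τ : SympGrp B, Module.finrank (ZMod 2) V ≤ fixedRank τ.1 + (k + 1) →
          ∀ u : V, B u (τ.1 u) = 1 → Stmt1Aux.Dfun B v c f f' τ = 0 := by
        intro τ hτ u hu
        set w := τ.1 u + u with hw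
        have hBuw : B u w = 1 := by
          rw [hw, map_add, hu, hAlt, add_zero]
        have hw0 : w ≠ 0 := by
          intro h0
          rw [h0, map_zero] at hBuw
          exact absurd hBuw (by decide)
        have hstep := Stmt1Aux.step1 B hAlt τ.1 τ.2 u hu
        rw [← hw] at hstep
        have hD' : Stmt1Aux.Dfun B v c f f'
            ⟨τ.1.trans (Stmt1Aux.tv B hAlt w), Stmt1Aux.symp_trans B (symp_tv w) τ.2⟩ = 0 := by
          apply ih
          show Module.finrank (ZMod 2) V ≤ fixedRank (τ.1.trans (Stmt1Aux.tv B hAlt w)) + k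
          omega
        have hfact : τ.1 = (τ.1.trans (Stmt1Aux.tv B hAlt w)).trans (Stmt1Aux.tv B hAlt w) := by
          apply LinearEquiv.toLinearMap_injective
          apply LinearMap.ext
          intro x
          simp only [LinearEquiv.coe_coe, LinearEquiv.trans_apply]
          exact (Stmt1Aux.tv_tv B hAlt w (τ.1 x)).symm
        have := Dmul' ⟨Stmt1Aux.tv B hAlt w, symp_tv w⟩
          ⟨τ.1.trans (Stmt1Aux.tv B hAlt w), Stmt1Aux.symp_trans B (symp_tv w) τ.2⟩ τ hfact
        rw [this, hD', hwit w hw0, add_zero]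
      by_cases hcase : ∃ u, B u (σ.1 u) = 1
      · obtain ⟨u, hu⟩ := hcase
        exact case1 σ hσ u hu
      -- case 2
      have hall0 : ∀ u, B u (σ.1 u) = 0 :=
        fun u => Stmt1Aux.zne1 _ (fun h => hcase ⟨u, h⟩)
      have csym : ∀ a b : V, B a (σ.1 b) = B b (σ.1 a) := by
        intro a b
        have h := hall0 (a + b)
        simp only [map_add, LinearMap.add_apply, hall0, add_zero, zero_add] at h
        apply Stmt1Aux.zeq
        linear_combination h
      obtain ⟨p, hp⟩ : ∃ p, σ.1 p ≠ p := by
        by_contra hfix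
        push_neg at hfix
        exact hid (LinearEquiv.toLinearMap_injective (LinearMap.ext
          (fun x => by simpa using hfix x)))
      have hppne : σ.1 p + p ≠ 0 := fun h0 => hp (Stmt1Aux.zeqV _ _ h0)
      obtain ⟨x, hx⟩ : ∃ x, B x (σ.1 p + p) = 1 := by
        by_contra hno
        push_neg at hno
        apply hppne
        apply hNondeg
        intro w0
        rw [Stmt1Aux.Bsym B hAlt (σ.1 p + p) w0]
        exact Stmt1Aux.zne1 _ (hno w0)
      obtain ⟨u, hu1, hu2⟩ : ∃ u, σ.1 u ≠ u ∧ B u (σ.1 p + p) = 1 := by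
        by_cases hxfix : σ.1 x = x
        · refine ⟨x + p, ?_, ?_⟩
          · intro h0
            rw [map_add, hxfix] at h0
            exact hp (add_left_cancel h0)
          · have hx' := hx
            simp only [map_add, LinearMap.add_apply, hall0, hAlt, add_zero, zero_add] at hx' ⊢
            linear_combination hx'
        · exact ⟨x, hxfix, hx⟩
      set h := σ.1 p + p with hh
      have hBuh : B u h = 1 := hu2
      have hh0 : h ≠ 0 := by
        intro h0
        rw [h0, map_zero] at hBuh
        exact absurd hBuh (by decide)
      -- σ'' = tv h ∘ σ
      have hker : LinearMap.ker (σ.1.toLinearMap - LinearMap.id) ≤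
          LinearMap.ker ((σ.1.trans (Stmt1Aux.tv B hAlt h)).toLinearMap - LinearMap.id) := by
        intro y hy
        rw [Stmt1Aux.memK] at hy ⊢
        have h1 : (σ.1.trans (Stmt1Aux.tv B hAlt h)) y = Stmt1Aux.tv B hAlt h y := by
          simp only [LinearEquiv.trans_apply, hy]
        have h2 : B h y = 0 := by
          rw [hh, map_add, LinearMap.add_apply]
          have : B (σ.1 p) y = B p y := by
            conv_lhs => rw [← hy]
            exact σ.2 p y
          rw [this, Stmt1Aux.Bsym B hAlt p y, Stmt1Aux.z2]
        rw [h1, Stmt1Aux.tv_apply, h2, zero_smul, add_zero]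
      have hmono : fixedRank σ.1 ≤ fixedRank (σ.1.trans (Stmt1Aux.tv B hAlt h)) :=
        Stmt1Aux.rank_mono _ _ hker
      have hBhσu : B h (σ.1 u) = 1 := by
        have e1 : B h (σ.1 u) = B p u + B p (σ.1 u) := by
          rw [hh, map_add, LinearMap.add_apply, σ.2 p u]
        have e2 : B u h = B u (σ.1 p) + B u p := by
          rw [hh, map_add]
        have e3 : B p (σ.1 u) = B u (σ.1 p) := csym p u
        have e4 : B p u = B u p := Stmt1Aux.Bsym B hAlt p u
        rw [e1, e3, e4]
        rw [e2] at hBuh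
        rw [← hBuh]; ring
      have hBu'' : B u ((σ.1.trans (Stmt1Aux.tv B hAlt h)) u) = 1 := by
        have : (σ.1.trans (Stmt1Aux.tv B hAlt h)) u = σ.1 u + B h (σ.1 u) • h := by
          simp only [LinearEquiv.trans_apply]
          rw [Stmt1Aux.tv_apply]
        rw [this, map_add, hall0 u, zero_add, map_smul, smul_eq_mul, hBhσu, hBuh]
        norm_num
      have hD'' : Stmt1Aux.Dfun B v c f f'
          ⟨σ.1.trans (Stmt1Aux.tv B hAlt h), Stmt1Aux.symp_trans B (symp_tv h) σ.2⟩ = 0 := by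
        apply case1 _ _ u hBu''
        show Module.finrank (ZMod 2) V ≤ fixedRank (σ.1.trans (Stmt1Aux.tv B hAlt h)) + (k + 1)
        omega
      have hfact : σ.1 = (σ.1.trans (Stmt1Aux.tv B hAlt h)).trans (Stmt1Aux.tv B hAlt h) := by
        apply LinearEquiv.toLinearMap_injective
        apply LinearMap.ext
        intro y
        simp only [LinearEquiv.coe_coe, LinearEquiv.trans_apply]
        exact (Stmt1Aux.tv_tv B hAlt h (σ.1 y)).symm
      have := Dmul' ⟨Stmt1Aux.tv B hAlt h, symp_tv h⟩
        ⟨σ.1.trans (Stmt1Aux.tv B hAlt h), Stmt1Aux.symp_trans B (symp_tv h) σ.2⟩ σ hfact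
      rw [this, hD'', hwit h hh0, add_zero]
  -- good witnesses
  have DTgood : ∀ w : V, q w = 1 → B v w = 0 →
      Stmt1Aux.Dfun B v c f f' ⟨Stmt1Aux.tv B hAlt w, symp_tv w⟩ = 0 := by
    intro w hw1 hw2
    have hcw : c (Stmt1Aux.tv B hAlt w) = 0 := by
      rw [Stmt1Aux.c_tv B hAlt hNondeg q hq c hc w, hw1,
        show ((1 : ZMod 2) + 1) = 0 from rfl, zero_smul]
    have hfw : f ⟨Stmt1Aux.tv B hAlt w, symp_tv w⟩ =
        ((fixedRank (Stmt1Aux.tv B hAlt w) : ℕ) : ZMod 2) :=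
      hf₂ _ (fun x => Stmt1Aux.tvO B q hq hAlt w hw1 x)
    have hf'w : f' ⟨Stmt1Aux.tv B hAlt w, symp_tv w⟩ =
        ((fixedRank (Stmt1Aux.tv B hAlt w) : ℕ) : ZMod 2) :=
      hf'₂ _ (fun x => Stmt1Aux.tvO' B q hq hAlt v w (by rw [hw1, hw2, add_zero]) x)
    have hlast : B v (Stmt1Aux.tv B hAlt w v) = 0 := by
      rw [Stmt1Aux.tv_apply, map_add, map_smul, smul_eq_mul, hAlt, hw2, mul_zero, add_zero]
    show f' _ + f _ + B (c (Stmt1Aux.tv B hAlt w)) _ + B v (c (Stmt1Aux.tv B hAlt w)) +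
      B v _ = 0
    rw [hfw, hf'w, hcw, hlast]
    simp [Stmt1Aux.z2]
  -- dichotomy: trivial space or a witness transvection
  by_cases htriv : ∀ x : V, x = 0
  · intro σ
    have h1 : σ = (⟨LinearEquiv.refl (ZMod 2) V, fun u w => rfl⟩ : SympGrp B) := by
      apply Subtype.ext
      apply LinearEquiv.toLinearMap_injective
      apply LinearMap.ext
      intro x
      rw [htriv x]
      simp
    rw [h1]; exact Done
  have hwitness : ∃ w₀ : V, w₀ ≠ 0 ∧
      Stmt1Aux.Dfun B v c f f' ⟨Stmt1Aux.tv B hAlt w₀, symp_tv w₀⟩ = 0 := by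
    have hq0 := Stmt1Aux.q0 B q hq
    by_cases hqv : q v = 1
    · exact ⟨v, fun h0 => by rw [h0, hq0] at hqv; exact absurd hqv (by decide),
        DTgood v hqv (hAlt v)⟩
    have hqv0 : q v = 0 := Stmt1Aux.zne1 _ hqv
    by_cases hv0 : v = 0
    · by_cases hq1 : ∃ w, q w = 1
      · obtain ⟨w, hw⟩ := hq1
        refine ⟨w, fun h0 => by rw [h0, hq0] at hw; exact absurd hw (by decide),
          DTgood w hw (by rw [hv0, map_zero, LinearMap.zero_apply])⟩
      · exfalso
        apply htriv
        intro x
        apply hNondeg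
        intro w
        have h1 : ∀ y : V, q y = 0 := fun y => Stmt1Aux.zne1 _ (fun h => hq1 ⟨y, h⟩)
        have := hq x w
        rw [h1, h1, h1] at this
        simpa using this.symm
    -- v ≠ 0 and q v = 0
    by_cases hex : ∃ w, B v w = 0 ∧ q w = 1
    · obtain ⟨w, h1, h2⟩ := hex
      exact ⟨w, fun h0 => by rw [h0, hq0] at h2; exact absurd h2 (by decide),
        DTgood w h2 h1⟩
    -- the exceptional small case
    have hbad : ∀ w, B v w = 0 → q w = 0 := by
      intro w hw
      exact Stmt1Aux.zne1 _ (fun h => hex ⟨w, hw, h⟩)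
    obtain ⟨a, hva, hqa⟩ : ∃ a, B v a = 1 ∧ q a = 1 := by
      obtain ⟨a₀, ha₀⟩ : ∃ a₀, B v a₀ = 1 := by
        by_contra hno
        push_neg at hno
        exact hv0 (hNondeg v (fun w => Stmt1Aux.zne1 _ (hno w)))
      by_cases hqa₀ : q a₀ = 1
      · exact ⟨a₀, ha₀, hqa₀⟩
      · refine ⟨v + a₀, ?_, ?_⟩
        · rw [map_add, hAlt, ha₀, zero_add]
        · rw [Stmt1Aux.qadd B q hq, ha₀, hqv0, Stmt1Aux.zne1 _ hqa₀]
          decide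
    have ha0 : a ≠ 0 := fun h0 => by
      rw [h0, map_zero] at hva; exact absurd hva (by decide)
    have hqva : q (v + a) = 0 := by
      rw [Stmt1Aux.qadd B q hq, hva, hqv0, hqa]
      decide
    have hva0 : v + a ≠ 0 := fun h0 => by
      have : B v (v + a) = 0 := by rw [h0, map_zero]
      rw [map_add, hAlt, hva, zero_add] at this
      exact absurd this (by decide)
    -- classification of the orthogonal complement of v
    have hv1 : ∀ w, B v w = 0 → w = 0 ∨ w = v := by
      intro w hw
      have hq_w : q w = 0 := hbad w hw
      have horth : ∀ t, B v t = 0 → B w t = 0 := by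
        intro t ht
        have h1 : q t = 0 := hbad t ht
        have h2 : q (w + t) = 0 := hbad _ (by rw [map_add, hw, ht, add_zero])
        have h3 := Stmt1Aux.qadd B q hq w t
        rw [h1, h2, hq_w] at h3
        simpa using h3.symm
      have hw_t : ∀ t, B w t = B w a * B v t := by
        intro t
        have hd : B v (t + B v t • a) = 0 := by
          rw [map_add, map_smul, smul_eq_mul, hva, mul_one]
          exact Stmt1Aux.z2 _
        have h0 := horth _ hd
        rw [map_add, map_smul, smul_eq_mul] at h0
        have h1 := Stmt1Aux.zeq _ _ h0
        rw [h1]; ring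
      have hz : w + B w a • v = 0 := by
        apply hNondeg
        intro t
        simp only [map_add, map_smul, LinearMap.add_apply, LinearMap.smul_apply, smul_eq_mul]
        rw [hw_t t]
        exact Stmt1Aux.z2 _
      have hw_eq : w = B w a • v := Stmt1Aux.zeqV _ _ hz
      rcases Stmt1Aux.zcases (B w a) with h | h
      · left; rw [hw_eq, h, zero_smul]
      · right; rw [hw_eq, h, one_smul]
    have hclass : ∀ x : V, x = B v x • a ∨ x = B v x • a + v := by
      intro x
      have hd : B v (x + B v x • a) = 0 := by
        rw [map_add, map_smul, smul_eq_mul, hva, mul_one]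
        exact Stmt1Aux.z2 _
      rcases hv1 _ hd with h | h
      · left; exact Stmt1Aux.zeqV _ _ h
      · right
        have h3 := congrArg (fun t => t + B v x • a) h
        rw [add_assoc, Stmt1Aux.addself, add_zero] at h3
        exact h3.trans (add_comm _ _)
    have hspan : Submodule.span (ZMod 2) ({v, a} : Set V) = ⊤ := by
      rw [Submodule.eq_top_iff']
      intro x
      have hv_mem : v ∈ Submodule.span (ZMod 2) ({v, a} : Set V) :=
        Submodule.subset_span (by simp)
      have ha_mem : a ∈ Submodule.span (ZMod 2) ({v, a} : Set V) :=
        Submodule.subset_span (by simp)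
      rcases hclass x with h | h
      · rw [h]; exact Submodule.smul_mem _ _ ha_mem
      · rw [h]; exact Submodule.add_mem _ (Submodule.smul_mem _ _ ha_mem) hv_mem
    -- B-values in the small case
    have hBav : B a v = 1 := by rw [Stmt1Aux.Bsym B hAlt a v]; exact hva
    have hBvva : B v (v + a) = 1 := by rw [map_add, hAlt, hva, zero_add]
    have hBvav : B (v + a) v = 1 := by
      simp only [map_add, LinearMap.add_apply]
      rw [hAlt, hBav, zero_add]
    have hBvaa : B (v + a) a = 1 := by
      simp only [map_add, LinearMap.add_apply]
      rw [hAlt, hva, add_zero]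
    have hBava : B a (a + v) = 1 := by rw [map_add, hAlt, hBav, zero_add]
    -- transvection evaluations
    have tvv_v : Stmt1Aux.tv B hAlt v v = v := by
      rw [Stmt1Aux.tv_apply, hAlt, zero_smul, add_zero]
    have tvv_a : Stmt1Aux.tv B hAlt v a = a + v := by
      rw [Stmt1Aux.tv_apply, hva, one_smul]
    have tva_v : Stmt1Aux.tv B hAlt a v = v + a := by
      rw [Stmt1Aux.tv_apply, hBav, one_smul]
    have tva_a : Stmt1Aux.tv B hAlt a a = a := by
      rw [Stmt1Aux.tv_apply, hAlt, zero_smul, add_zero]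
    have tvva_v : Stmt1Aux.tv B hAlt (v + a) v = a := by
      rw [Stmt1Aux.tv_apply, hBvav, one_smul, ← add_assoc, Stmt1Aux.addself, zero_add]
    have tvva_a : Stmt1Aux.tv B hAlt (v + a) a = v := by
      rw [Stmt1Aux.tv_apply, hBvaa, one_smul, add_comm v a, ← add_assoc, Stmt1Aux.addself,
        zero_add]
    have tvva_va : Stmt1Aux.tv B hAlt (v + a) (v + a) = v + a := by
      rw [Stmt1Aux.tv_apply, hAlt, zero_smul, add_zero]
    have tvv_va : Stmt1Aux.tv B hAlt v (v + a) = a := by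
      rw [Stmt1Aux.tv_apply, hBvva, one_smul, add_comm v a, add_assoc, Stmt1Aux.addself,
        add_zero]
    have tva_av : Stmt1Aux.tv B hAlt a (a + v) = v := by
      rw [Stmt1Aux.tv_apply, hBava, one_smul, add_comm a v, add_assoc, Stmt1Aux.addself,
        add_zero]
    -- cocycle values
    have hc_v : c (Stmt1Aux.tv B hAlt v) = v := by
      rw [Stmt1Aux.c_tv B hAlt hNondeg q hq c hc v, hqv0, zero_add, one_smul]
    have hc_a : c (Stmt1Aux.tv B hAlt a) = 0 := by
      rw [Stmt1Aux.c_tv B hAlt hNondeg q hq c hc a, hqa,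
        show ((1 : ZMod 2) + 1) = 0 from rfl, zero_smul]
    have hc_va : c (Stmt1Aux.tv B hAlt (v + a)) = v + a := by
      rw [Stmt1Aux.c_tv B hAlt hNondeg q hq c hc (v + a), hqva, zero_add, one_smul]
    -- braid-type identities
    have e2 : (Stmt1Aux.tv B hAlt v).trans (Stmt1Aux.tv B hAlt a) =
        (Stmt1Aux.tv B hAlt a).trans (Stmt1Aux.tv B hAlt (v + a)) := by
      apply LinearEquiv.toLinearMap_injective
      apply LinearMap.ext_on hspan
      intro x hx
      rcases Set.mem_insert_iff.mp hx with h | h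
      · rw [h]
        simp only [LinearEquiv.coe_coe, LinearEquiv.trans_apply]
        rw [tvv_v, tva_v, tvva_va]
      · rw [Set.mem_singleton_iff] at h
        rw [h]
        simp only [LinearEquiv.coe_coe, LinearEquiv.trans_apply]
        rw [tvv_a, tva_av, tva_a, tvva_a]
    have e3 : (Stmt1Aux.tv B hAlt v).trans (Stmt1Aux.tv B hAlt a) =
        (Stmt1Aux.tv B hAlt (v + a)).trans (Stmt1Aux.tv B hAlt v) := by
      apply LinearEquiv.toLinearMap_injective
      apply LinearMap.ext_on hspan
      intro x hx
      rcases Set.mem_insert_iff.mp hx with h | h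
      · rw [h]
        simp only [LinearEquiv.coe_coe, LinearEquiv.trans_apply]
        rw [tvv_v, tva_v, tvva_v, tvv_a, add_comm v a]
      · rw [Set.mem_singleton_iff] at h
        rw [h]
        simp only [LinearEquiv.coe_coe, LinearEquiv.trans_apply]
        rw [tvv_a, tva_av, tvva_a, tvv_v]
    -- fixed ranks of the three transvections
    have hker_a : LinearMap.ker ((Stmt1Aux.tv B hAlt a).toLinearMap - LinearMap.id) =
        Submodule.span (ZMod 2) {a} := by
      ext x
      rw [Stmt1Aux.memK, Submodule.mem_span_singleton]
      constructor
      · intro hfix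
        rw [Stmt1Aux.tv_apply] at hfix
        have h0 : B a x • a = 0 := add_eq_left.mp hfix
        have hBax : B a x = 0 := by
          rcases Stmt1Aux.zcases (B a x) with h | h
          · exact h
          · rw [h, one_smul] at h0; exact absurd h0 ha0
        rcases hclass x with h | h
        · exact ⟨B v x, h.symm⟩
        · exfalso
          have hone : B a x = 1 := by
            conv_lhs => rw [h]
            rw [map_add, map_smul, smul_eq_mul, hAlt, hBav, mul_zero, zero_add]
          rw [hBax] at hone
          exact absurd hone (by decide)
      · rintro ⟨s, rfl⟩
        rw [Stmt1Aux.tv_apply, map_smul, smul_eq_mul, hAlt, mul_zero, zero_smul, add_zero]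
    have frk_a : fixedRank (Stmt1Aux.tv B hAlt a) = 1 := by
      show Module.finrank (ZMod 2)
        ↥(LinearMap.ker ((Stmt1Aux.tv B hAlt a).toLinearMap - LinearMap.id)) = 1
      rw [hker_a]
      exact finrank_span_singleton ha0
    have hker_va : LinearMap.ker ((Stmt1Aux.tv B hAlt (v + a)).toLinearMap - LinearMap.id) =
        Submodule.span (ZMod 2) {v + a} := by
      ext x
      rw [Stmt1Aux.memK, Submodule.mem_span_singleton]
      constructor
      · intro hfix
        rw [Stmt1Aux.tv_apply] at hfix
        have h0 : B (v + a) x • (v + a) = 0 := add_eq_left.mp hfix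
        have hBx : B (v + a) x = 0 := by
          rcases Stmt1Aux.zcases (B (v + a) x) with h | h
          · exact h
          · rw [h, one_smul] at h0; exact absurd h0 hva0
        rcases hclass x with h | h
        · have hbv : B v x = 0 := by
            have hone : B (v + a) x = B v x := by
              conv_lhs => rw [h]
              rw [map_smul, smul_eq_mul, hBvaa, mul_one]
            rw [← hone, hBx]
          refine ⟨0, ?_⟩
          rw [zero_smul]
          conv_rhs => rw [h]
          rw [hbv, zero_smul]
        · have hbv : B v x = 1 := by
            have hone : B (v + a) x = B v x + 1 := by
              conv_lhs => rw [h]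
              rw [map_add, map_smul, smul_eq_mul, hBvaa, mul_one, hBvav]
            rw [hBx] at hone
            rcases Stmt1Aux.zcases (B v x) with h2 | h2
            · rw [h2] at hone; exact absurd hone.symm (by decide)
            · exact h2
          refine ⟨1, ?_⟩
          rw [one_smul]
          conv_rhs => rw [h]
          rw [hbv, one_smul, add_comm]
      · rintro ⟨s, rfl⟩
        rw [Stmt1Aux.tv_apply, map_smul, smul_eq_mul, hAlt, mul_zero, zero_smul, add_zero]
    have frk_va : fixedRank (Stmt1Aux.tv B hAlt (v + a)) = 1 := by
      show Module.finrank (ZMod 2)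
        ↥(LinearMap.ker ((Stmt1Aux.tv B hAlt (v + a)).toLinearMap - LinearMap.id)) = 1
      rw [hker_va]
      exact finrank_span_singleton hva0
    -- f-values from the Dickson condition
    have fSa : f ⟨Stmt1Aux.tv B hAlt a, symp_tv a⟩ = 1 := by
      have h1 : f ⟨Stmt1Aux.tv B hAlt a, symp_tv a⟩ =
          ((fixedRank (Stmt1Aux.tv B hAlt a) : ℕ) : ZMod 2) :=
        hf₂ _ (fun x => Stmt1Aux.tvO B q hq hAlt a hqa x)
      rw [h1, frk_a, Nat.cast_one]
    have f'Sva : f' ⟨Stmt1Aux.tv B hAlt (v + a), symp_tv (v + a)⟩ = 1 := by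
      have h1 : f' ⟨Stmt1Aux.tv B hAlt (v + a), symp_tv (v + a)⟩ =
          ((fixedRank (Stmt1Aux.tv B hAlt (v + a)) : ℕ) : ZMod 2) :=
        hf'₂ _ (fun x => Stmt1Aux.tvO' B q hq hAlt v (v + a)
          (by rw [hqva, hBvva, zero_add]) x)
      rw [h1, frk_va, Nat.cast_one]
    -- the three coboundary relations
    have E1 : f ⟨(Stmt1Aux.tv B hAlt v).trans (Stmt1Aux.tv B hAlt a),
          Stmt1Aux.symp_trans B (symp_tv a) (symp_tv v)⟩ +
        f ⟨Stmt1Aux.tv B hAlt a, symp_tv a⟩ + f ⟨Stmt1Aux.tv B hAlt v, symp_tv v⟩ =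
        B (c (Stmt1Aux.tv B hAlt a)) (Stmt1Aux.tv B hAlt a (c (Stmt1Aux.tv B hAlt v))) :=
      hf₁ ⟨Stmt1Aux.tv B hAlt a, symp_tv a⟩ ⟨Stmt1Aux.tv B hAlt v, symp_tv v⟩ _ rfl
    rw [hc_a] at E1
    simp only [map_zero, LinearMap.zero_apply] at E1
    have E2 : f ⟨(Stmt1Aux.tv B hAlt v).trans (Stmt1Aux.tv B hAlt a),
          Stmt1Aux.symp_trans B (symp_tv a) (symp_tv v)⟩ +
        f ⟨Stmt1Aux.tv B hAlt (v + a), symp_tv (v + a)⟩ +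
        f ⟨Stmt1Aux.tv B hAlt a, symp_tv a⟩ =
        B (c (Stmt1Aux.tv B hAlt (v + a)))
          (Stmt1Aux.tv B hAlt (v + a) (c (Stmt1Aux.tv B hAlt a))) :=
      hf₁ ⟨Stmt1Aux.tv B hAlt (v + a), symp_tv (v + a)⟩ ⟨Stmt1Aux.tv B hAlt a, symp_tv a⟩ _ e2
    rw [hc_a] at E2
    simp only [map_zero] at E2
    have E3 : f ⟨(Stmt1Aux.tv B hAlt v).trans (Stmt1Aux.tv B hAlt a),
          Stmt1Aux.symp_trans B (symp_tv a) (symp_tv v)⟩ +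
        f ⟨Stmt1Aux.tv B hAlt v, symp_tv v⟩ +
        f ⟨Stmt1Aux.tv B hAlt (v + a), symp_tv (v + a)⟩ =
        B (c (Stmt1Aux.tv B hAlt v))
          (Stmt1Aux.tv B hAlt v (c (Stmt1Aux.tv B hAlt (v + a)))) :=
      hf₁ ⟨Stmt1Aux.tv B hAlt v, symp_tv v⟩ ⟨Stmt1Aux.tv B hAlt (v + a), symp_tv (v + a)⟩ _ e3
    rw [hc_v, hc_va, tvv_va, hva] at E3
    rw [fSa] at E1 E2
    have zsolve : ∀ A Bb C : ZMod 2, A + 1 + Bb = 0 → A + C + 1 = 0 → A + Bb + C = 1 →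
        C = 0 := by decide
    have fSva : f ⟨Stmt1Aux.tv B hAlt (v + a), symp_tv (v + a)⟩ = 0 :=
      zsolve _ _ _ E1 E2 E3
    -- conclusion for the witness  v + a
    refine ⟨v + a, hva0, ?_⟩
    show f' ⟨Stmt1Aux.tv B hAlt (v + a), symp_tv (v + a)⟩ +
      f ⟨Stmt1Aux.tv B hAlt (v + a), symp_tv (v + a)⟩ +
      B (c (Stmt1Aux.tv B hAlt (v + a))) (Stmt1Aux.tv B hAlt (v + a) v) +
      B v (c (Stmt1Aux.tv B hAlt (v + a))) +
      B v (Stmt1Aux.tv B hAlt (v + a) v) = 0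
    rw [f'Sva, fSva, hc_va, tvva_v, hBvaa, hBvva, hva]
    decide
  obtain ⟨w₀, hw₀ne, hw₀D⟩ := hwitness
  exact main (fun w hw => by rw [Dtv_const w w₀ hw hw₀ne]; exact hw₀D)
end

section
/- Let V be a finite-dimensional vector space over F₂ with a nondegenerate alternating bilinear form B and let q be a quadratic refinement of B. Let W = V × F₂ × F₂ with quadratic form q_W(z,a,b) = q(z) + a + b + ab, and for g = (σ,α) ∈ Sp(V) × F₂ define the linear map φ_q(g) : W → W by φ_q(g)(z,a,b) = (σ(z) + b·c_q(σ), a + B(c_q(σ), σ(z)) + αb, b). Then: (1) each φ_q(g) is a linear automorphism of W preserving q_W (i.e. q_W ∘ φ_q(g) = q_W); and (2) φ_q is a group homomorphism from E_q to O(q_W), i.e. for g = (σ,α) and h = (σ',α') one has φ_q((σσ', α + α' + B(c_q(σ), σ(c_q(σ'))))) = φ_q(g) ∘ φ_q(h). -/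
/-- Sign character on `ZMod 2`. -/
private def sgn (x : ZMod 2) : ℤ := if x = 0 then 1 else -1

private lemma sgn_add : ∀ x y : ZMod 2, sgn (x + y) = sgn x * sgn y := by decide
private lemma sgn_zero : sgn 0 = 1 := by decide
private lemma sgn_one : sgn 1 = -1 := by decide
private lemma sgn_eq_one : ∀ x : ZMod 2, sgn x = 1 → x = 0 := by decide

private lemma zlem1 : ∀ a : ZMod 2, a + a + a = 0 → a = 0 := by decide
private lemma zlem2 : ∀ a b : ZMod 2, a + b = 0 → a = b := by decide
private lemma zlem3 : ∀ a b c d : ZMod 2, a + b + c = d → a = d + b + c := by decide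
private lemma zlem4 : ∀ x : ZMod 2, x + x = 0 := by decide
private lemma zlem5 : ∀ a b c d : ZMod 2, a + b + c = d → d + c = b + a := by decide
private lemma zlem6 : ∀ a b c : ZMod 2, a = b + c → b = a + c := by decide
private lemma zlem7 : ∀ x z : ZMod 2, sgn x = sgn z * sgn (x + z) := by decide
private lemma zlem8 : ∀ a x : ZMod 2, a + (a + x) + x = 0 := by decide
private lemma zlem9 : ∀ a x : ZMod 2, a + x + a + x = 0 := by decide

/-- Gauss sum argument: `q (c σ) = 0`. -/
private theorem aux_qc_zero {V : Type*} [AddCommGroup V] [Module (ZMod 2) V]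
    [FiniteDimensional (ZMod 2) V]
    (B : V →ₗ[ZMod 2] V →ₗ[ZMod 2] ZMod 2)
    (hBsymm : ∀ u w : V, B u w = B w u)
    (hNondeg : ∀ v : V, (∀ w : V, B v w = 0) → v = 0)
    (q : V → ZMod 2)
    (hq : ∀ u w : V, q (u + w) + q u + q w = B u w)
    (σ : V ≃ₗ[ZMod 2] V) (cσ : V)
    (hcσ : ∀ w : V, B w cσ = q (σ.symm w) + q w) :
    q cσ = 0 := by
  classical
  haveI : Finite V := Module.finite_of_finite (ZMod 2)
  haveI : Fintype V := Fintype.ofFinite V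
  have hq0 : q 0 = 0 := by
    have h := hq 0 0
    simp only [add_zero, map_zero, LinearMap.zero_apply] at h
    exact zlem1 _ h
  set S : ℤ := ∑ v : V, sgn (q v) with hS
  have hsum0 : ∀ w : V, w ≠ 0 → (∑ u : V, sgn (B u w)) = 0 := by
    intro w hw
    obtain ⟨u₀, hu₀⟩ : ∃ u₀, B u₀ w ≠ 0 := by
      by_contra h
      push_neg at h
      exact hw (hNondeg w fun u => by rw [hBsymm]; exact h u)
    have hu1 : B u₀ w = 1 := by
      have : ∀ x : ZMod 2, x ≠ 0 → x = 1 := by decide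
      exact this _ hu₀
    have hre : (∑ u : V, sgn (B (u₀ + u) w)) = ∑ u : V, sgn (B u w) :=
      Fintype.sum_equiv (Equiv.addLeft u₀) _ _ fun u => rfl
    have key : ∀ u : V, sgn (B (u₀ + u) w) = - sgn (B u w) := by
      intro u
      rw [map_add, LinearMap.add_apply, hu1, sgn_add, sgn_one]
      ring
    have h2 : (∑ u : V, sgn (B u w)) = - ∑ u : V, sgn (B u w) := by
      conv_lhs => rw [← hre]
      simp only [key]
      rw [Finset.sum_neg_distrib]
    linarith
  have hcard : S * S = (Fintype.card V : ℤ) := by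
    calc S * S = ∑ u : V, ∑ v : V, sgn (q u) * sgn (q v) :=
          Finset.sum_mul_sum _ _ _ _
      _ = ∑ u : V, ∑ w : V, sgn (B u w) * sgn (q w) := by
          refine Finset.sum_congr rfl fun u _ => ?_
          refine (Fintype.sum_equiv (Equiv.addLeft u) _ _ fun w => ?_).symm
          show sgn (B u w) * sgn (q w) = sgn (q u) * sgn (q (u + w))
          rw [← sgn_add, ← sgn_add]
          congr 1
          exact zlem5 _ _ _ _ (hq u w)
      _ = ∑ w : V, ∑ u : V, sgn (B u w) * sgn (q w) := Finset.sum_comm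
      _ = ∑ w : V, (∑ u : V, sgn (B u w)) * sgn (q w) := by
          refine Finset.sum_congr rfl fun w _ => (Finset.sum_mul _ _ _).symm
      _ = (∑ u : V, sgn (B u 0)) * sgn (q 0) :=
          Finset.sum_eq_single 0 (fun w _ hw => by rw [hsum0 w hw, zero_mul])
            (fun h => absurd (Finset.mem_univ 0) h)
      _ = (Fintype.card V : ℤ) := by
          simp [hq0, sgn_zero]
  have hSne : S ≠ 0 := by
    intro h
    rw [h, mul_zero] at hcard
    have : 0 < Fintype.card V := Fintype.card_pos
    omega
  have e1 : S = ∑ w : V, sgn (q (σ.symm w)) :=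
    Fintype.sum_equiv σ.toEquiv _ _ fun v => by
      simp only [LinearEquiv.coe_toEquiv, LinearEquiv.symm_apply_apply]
  have e2 : ∀ w : V, sgn (q (σ.symm w)) = sgn (q cσ) * sgn (q (w + cσ)) := by
    intro w
    have h1 : q (σ.symm w) = B w cσ + q w := zlem6 _ _ _ (hcσ w)
    have h2 : q (w + cσ) = B w cσ + q w + q cσ := zlem3 _ _ _ _ (hq w cσ)
    rw [h1, h2]
    exact zlem7 _ _
  have h3 : S = sgn (q cσ) * S := by
    calc S = ∑ w : V, sgn (q (σ.symm w)) := e1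
      _ = ∑ w : V, sgn (q cσ) * sgn (q (w + cσ)) := by simp only [e2]
      _ = sgn (q cσ) * ∑ w : V, sgn (q (w + cσ)) := by rw [Finset.mul_sum]
      _ = sgn (q cσ) * S := by
          congr 1
          rw [hS]
          exact Fintype.sum_equiv (Equiv.addRight cσ) _ _ fun w => rfl
  have h4 : sgn (q cσ) * S = 1 * S := by rw [one_mul, ← h3]
  exact sgn_eq_one _ (mul_right_cancel₀ hSne h4)

/-- Pollatsek's construction. With `W = V × F₂ × F₂`,
`q_W(z,a,b) = q(z) + a + b + ab` and
`φ_q(σ,α)(z,a,b) = (σ z + b·c_q(σ), a + B(c_q σ, σ z) + αb, b)`: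
(1) each `φ_q(σ,α)` is a linear automorphism of `W` preserving `q_W`;
(2) `φ_q` is a group homomorphism from the central extension `E_q` to `O(q_W)`. -/
theorem stmt2 (V : Type*) [AddCommGroup V] [Module (ZMod 2) V]
    [FiniteDimensional (ZMod 2) V]
    (B : V →ₗ[ZMod 2] V →ₗ[ZMod 2] ZMod 2)
    (hAlt : ∀ v : V, B v v = 0)
    (hNondeg : ∀ v : V, (∀ w : V, B v w = 0) → v = 0)
    (q : V → ZMod 2)
    (hq : ∀ u w : V, q (u + w) + q u + q w = B u w)
    (c : (V ≃ₗ[ZMod 2] V) → V)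
    (hc : ∀ σ : V ≃ₗ[ZMod 2] V, (∀ u w, B (σ u) (σ w) = B u w) →
      ∀ w : V, B w (c σ) = q (σ.symm w) + q w)
    (qW : V × ZMod 2 × ZMod 2 → ZMod 2)
    (hqW : ∀ (z : V) (a b : ZMod 2), qW (z, a, b) = q z + a + b + a * b)
    (φ : (V ≃ₗ[ZMod 2] V) → ZMod 2 →
      (V × ZMod 2 × ZMod 2) → V × ZMod 2 × ZMod 2)
    (hφ : ∀ (σ : V ≃ₗ[ZMod 2] V) (α : ZMod 2) (z : V) (a b : ZMod 2),
      φ σ α (z, a, b) = (σ z + b • c σ, a + B (c σ) (σ z) + α * b, b)) :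
    -- (1) each `φ σ α` is a linear automorphism of `W` preserving `q_W`
    (∀ σ : V ≃ₗ[ZMod 2] V, (∀ u w, B (σ u) (σ w) = B u w) → ∀ α : ZMod 2,
      (∃ L : (V × ZMod 2 × ZMod 2) ≃ₗ[ZMod 2] V × ZMod 2 × ZMod 2,
        ∀ x, L x = φ σ α x) ∧
      (∀ x, qW (φ σ α x) = qW x)) ∧
    -- (2) `φ` is a homomorphism `E_q → O(q_W)`
    (∀ σ σ' : V ≃ₗ[ZMod 2] V,
      (∀ u w, B (σ u) (σ w) = B u w) →
      (∀ u w, B (σ' u) (σ' w) = B u w) →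
      ∀ α α' : ZMod 2,
        φ (σ'.trans σ) (α + α' + B (c σ) (σ (c σ'))) = φ σ α ∘ φ σ' α') := by
  -- basic symmetry of B
  have hBsymm : ∀ u w : V, B u w = B w u := by
    intro u w
    have h := hAlt (u + w)
    simp only [map_add, LinearMap.add_apply] at h
    rw [hAlt u, hAlt w, zero_add, add_zero] at h
    first
      | exact zlem2 _ _ h
      | exact (zlem2 _ _ h).symm
  have hVadd : ∀ v : V, v + v = 0 := by
    intro v
    have h : ((1 : ZMod 2) + 1) • v = v + v := by rw [add_smul, one_smul]
    rw [← h, (by decide : (1 : ZMod 2) + 1 = 0), zero_smul]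
  have hNondeg' : ∀ u v : V, (∀ w, B w u = B w v) → u = v := by
    intro u v h
    have h0 : u + v = 0 := by
      apply hNondeg
      intro w
      have hadd : B (u + v) w = B u w + B v w := by
        rw [map_add, LinearMap.add_apply]
      rw [hadd, hBsymm u w, hBsymm v w, h w]
      exact zlem4 _
    calc u = u + (v + v) := by rw [hVadd, add_zero]
      _ = (u + v) + v := (add_assoc u v v).symm
      _ = v := by rw [h0, zero_add]
  have hqadd : ∀ u w : V, q (u + w) = B u w + q u + q w := fun u w =>
    zlem3 _ _ _ _ (hq u w)
  -- B (σ z) (c σ) = q z + q (σ z)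
  have hBc : ∀ (σ : V ≃ₗ[ZMod 2] V), (∀ u w, B (σ u) (σ w) = B u w) →
      ∀ z : V, B (σ z) (c σ) = q z + q (σ z) := by
    intro σ hσ z
    have h := hc σ hσ (σ z)
    rwa [LinearEquiv.symm_apply_apply] at h
  have hcB : ∀ (σ : V ≃ₗ[ZMod 2] V), (∀ u w, B (σ u) (σ w) = B u w) →
      ∀ z : V, B (c σ) (σ z) = q z + q (σ z) := by
    intro σ hσ z
    rw [hBsymm]
    exact hBc σ hσ z
  -- cocycle identity for c
  have hccomp : ∀ σ σ' : V ≃ₗ[ZMod 2] V, (∀ u w, B (σ u) (σ w) = B u w) →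
      (∀ u w, B (σ' u) (σ' w) = B u w) →
      c (σ'.trans σ) = σ (c σ') + c σ := by
    intro σ σ' hσ hσ'
    have htr : ∀ u w, B ((σ'.trans σ) u) ((σ'.trans σ) w) = B u w := by
      intro u w
      simp only [LinearEquiv.trans_apply]
      rw [hσ, hσ']
    refine hNondeg' _ _ ?_
    intro w
    rw [hc _ htr w, map_add]
    have h1 : B w (σ (c σ')) = B (σ.symm w) (c σ') := by
      have h := hσ (σ.symm w) (c σ')
      rwa [σ.apply_symm_apply] at h
    rw [h1, hc σ' hσ' (σ.symm w), hc σ hσ w, LinearEquiv.symm_trans_apply]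
    generalize q (σ'.symm (σ.symm w)) = x
    generalize q (σ.symm w) = y
    generalize q w = t
    revert x y t
    decide
  -- the homomorphism property
  have hmul : ∀ σ σ' : V ≃ₗ[ZMod 2] V,
      (∀ u w, B (σ u) (σ w) = B u w) →
      (∀ u w, B (σ' u) (σ' w) = B u w) →
      ∀ α α' : ZMod 2,
        φ (σ'.trans σ) (α + α' + B (c σ) (σ (c σ'))) = φ σ α ∘ φ σ' α' := by
    intro σ σ' hσ hσ' α α'
    funext x
    obtain ⟨z, a, b⟩ := x
    simp only [Function.comp_apply, hφ]
    rw [hccomp σ σ' hσ hσ']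
    simp only [LinearEquiv.trans_apply, Prod.mk.injEq]
    refine ⟨?_, ?_, by trivial⟩
    · rw [map_add, map_smul, smul_add]
      abel
    · rw [map_add, LinearMap.add_apply, hσ, map_add, map_smul, map_add, map_smul,
        smul_eq_mul]
      ring
  -- identity element
  have hcid : c (LinearEquiv.refl (ZMod 2) V) = 0 := by
    refine hNondeg' _ _ ?_
    intro w
    rw [hc _ (fun u w => rfl) w, map_zero]
    show q w + q w = 0
    exact zlem4 _
  have hid : φ (LinearEquiv.refl (ZMod 2) V) 0 = id := by
    funext x
    obtain ⟨z, a, b⟩ := x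
    rw [hφ, hcid]
    simp
  refine ⟨?_, fun σ σ' hσ hσ' α α' => hmul σ σ' hσ hσ' α α'⟩
  intro σ hσ α
  have hσs : ∀ u w, B (σ.symm u) (σ.symm w) = B u w := by
    intro u w
    conv_rhs => rw [← σ.apply_symm_apply u, ← σ.apply_symm_apply w]
    exact (hσ _ _).symm
  constructor
  · -- linear automorphism
    have hlin : ∀ (τ : V ≃ₗ[ZMod 2] V) (γ : ZMod 2),
        ∃ F : (V × ZMod 2 × ZMod 2) →ₗ[ZMod 2] V × ZMod 2 × ZMod 2,
          ∀ x, F x = φ τ γ x := by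
      intro τ γ
      refine ⟨⟨⟨φ τ γ, ?_⟩, ?_⟩, fun x => rfl⟩
      · intro x y
        obtain ⟨z, a, b⟩ := x
        obtain ⟨z', a', b'⟩ := y
        simp only [Prod.mk_add_mk, hφ, Prod.mk.injEq]
        refine ⟨?_, ?_, by trivial⟩
        · rw [map_add, add_smul]
          abel
        · rw [map_add, map_add]
          ring
      · intro r x
        obtain ⟨z, a, b⟩ := x
        simp only [Prod.smul_mk, hφ, RingHom.id_apply, Prod.mk.injEq, smul_eq_mul]
        refine ⟨?_, ?_, by trivial⟩
        · rw [map_smul, mul_smul, smul_add]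
        · simp only [map_smul, smul_eq_mul]
          ring
    obtain ⟨f, hf⟩ := hlin σ α
    obtain ⟨g, hg⟩ := hlin σ.symm (α + B (c σ) (σ (c σ.symm)))
    have hinv1 : φ σ α ∘ φ σ.symm (α + B (c σ) (σ (c σ.symm))) = id := by
      have h1 := hmul σ σ.symm hσ hσs α (α + B (c σ) (σ (c σ.symm)))
      rw [LinearEquiv.symm_trans_self] at h1
      rw [← h1, zlem8, hid]
    have hXY : B (c σ) (σ (c σ.symm)) = B (c σ.symm) (σ.symm (c σ)) := by
      have h := hσ (c σ.symm) (σ.symm (c σ))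
      rw [σ.apply_symm_apply] at h
      rw [← h, hBsymm]
    have hinv2 : φ σ.symm (α + B (c σ) (σ (c σ.symm))) ∘ φ σ α = id := by
      have h1 := hmul σ.symm σ hσs hσ (α + B (c σ) (σ (c σ.symm))) α
      rw [LinearEquiv.self_trans_symm] at h1
      rw [← h1, ← hXY, zlem9, hid]
    refine ⟨LinearEquiv.ofLinear f g ?_ ?_, ?_⟩
    · apply LinearMap.ext
      intro x
      rw [LinearMap.comp_apply, hg, hf]
      exact congrFun hinv1 x
    · apply LinearMap.ext
      intro x
      rw [LinearMap.comp_apply, hf, hg]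
      exact congrFun hinv2 x
    · intro x
      rw [LinearEquiv.ofLinear_apply]
      exact hf x
  · -- preserves qW
    have hqc : q (c σ) = 0 := aux_qc_zero B hBsymm hNondeg q hq σ (c σ) (hc σ hσ)
    intro x
    obtain ⟨z, a, b⟩ := x
    rw [hφ, hqW, hqW]
    have hq1 : B (c σ) (σ z) = q z + q (σ z) := hcB σ hσ z
    have hb2 : b = 0 ∨ b = 1 := by revert b; decide
    rcases hb2 with rfl | rfl
    · simp only [zero_smul, add_zero, mul_zero]
      rw [hq1]
      generalize q (σ z) = s
      generalize q z = t
      revert a s t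
      decide
    · simp only [one_smul, mul_one]
      rw [hqadd (σ z) (c σ), hBc σ hσ z, hqc, hq1]
      generalize q (σ z) = s
      generalize q z = t
      revert a α s t
      decide
end

section
/- Let V be a finite-dimensional vector space over F₂ with a nondegenerate alternating bilinear form B and let q be a quadratic refinement of B. Then: (1) for each σ ∈ Sp(V) there is a unique element c_q(σ) ∈ V such that B(w, c_q(σ)) = q(σ⁻¹(w)) + q(w) for all w ∈ V; and (2) the resulting function c_q : Sp(V) → V is a 1-cocycle for the natural action of Sp(V) on V, i.e. c_q(στ) = c_q(σ) + σ(c_q(τ)) for all σ, τ ∈ Sp(V). -/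
/-- For a quadratic refinement `q` of a nondegenerate alternating bilinear form
`B` on a finite-dimensional `F₂`-vector space `V`:
(1) for each symplectic automorphism `σ` there is a unique `c ∈ V` with
    `B w c = q (σ⁻¹ w) + q w` for all `w`;
(2) the resulting assignment is a 1-cocycle: `c_{στ} = c_σ + σ (c_τ)`. -/
theorem stmt3 (V : Type*) [AddCommGroup V] [Module (ZMod 2) V]
    [FiniteDimensional (ZMod 2) V]
    (B : V →ₗ[ZMod 2] V →ₗ[ZMod 2] ZMod 2)
    (hAlt : ∀ v : V, B v v = 0)
    (hNondeg : ∀ v : V, (∀ w : V, B v w = 0) → v = 0)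
    (q : V → ZMod 2)
    (hq : ∀ u w : V, q (u + w) + q u + q w = B u w) :
    (∀ σ : V ≃ₗ[ZMod 2] V, (∀ u w, B (σ u) (σ w) = B u w) →
      ∃! c : V, ∀ w : V, B w c = q (σ.symm w) + q w) ∧
    (∀ σ τ : V ≃ₗ[ZMod 2] V,
      (∀ u w, B (σ u) (σ w) = B u w) →
      (∀ u w, B (τ u) (τ w) = B u w) →
      ∀ cσ cτ cστ : V,
        (∀ w : V, B w cσ = q (σ.symm w) + q w) →
        (∀ w : V, B w cτ = q (τ.symm w) + q w) →
        (∀ w : V, B w cστ = q ((τ.trans σ).symm w) + q w) →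
        cστ = cσ + σ cτ) := by
  -- symmetry of B
  have hsymm : ∀ u w : V, B u w = B w u := by
    intro u w
    have h := hAlt (u + w)
    simp only [map_add, LinearMap.add_apply, hAlt, zero_add, add_zero] at h
    have hz : ∀ a b : ZMod 2, a + b = 0 → a = b := by decide
    exact (hz _ _ h).symm
  have hB : LinearMap.BilinForm.Nondegenerate B := by
    refine ⟨fun v hv => ?_, fun v hv => hNondeg v (fun w => (hsymm v w).trans (hv w))⟩
    exact hNondeg v hv
  -- from equal pairings to equality
  have hsep : ∀ a b : V, (∀ w : V, B w a = B w b) → a = b := by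
    intro a b h
    have : ∀ w : V, B (a - b) w = 0 := by
      intro w
      have := h w
      rw [← hsymm a w, ← hsymm b w] at this
      simp [map_sub, LinearMap.sub_apply, this]
    have := hNondeg _ this
    exact sub_eq_zero.mp this
  -- existence for statement (1)
  have hex : ∀ σ : V ≃ₗ[ZMod 2] V, (∀ u w, B (σ u) (σ w) = B u w) →
      ∃ c : V, ∀ w : V, B w c = q (σ.symm w) + q w := by
    intro σ hσ
    have hq' : ∀ u w : V, q (u + w) = B u w + q u + q w := by
      intro u w
      have := hq u w
      have hz : ∀ a b c d : ZMod 2, a + b + c = d → a = d + b + c := by decide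
      exact hz _ _ _ _ this
    -- the map w ↦ q (σ.symm w) + q w is additive
    have hadd : ∀ u w : V, q (σ.symm (u + w)) + q (u + w)
        = (q (σ.symm u) + q u) + (q (σ.symm w) + q w) := by
      intro u w
      have h1 : q (σ.symm (u + w)) = B (σ.symm u) (σ.symm w) + q (σ.symm u) + q (σ.symm w) := by
        rw [map_add, hq']
      have h2 : q (u + w) = B u w + q u + q w := hq' u w
      have h3 : B (σ.symm u) (σ.symm w) = B u w := by
        have := hσ (σ.symm u) (σ.symm w)
        simp at this
        rw [← this]
      rw [h1, h2, h3]
      have hz : ∀ a b c d e : ZMod 2, (a + b + c) + (a + d + e) = (b + d) + (c + e) := by decide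
      exact hz _ _ _ _ _
    set F : V →+ ZMod 2 :=
      { toFun := fun w => q (σ.symm w) + q w
        map_zero' := by
          have : q (0 : V) + q 0 = 0 := by
            have hz : ∀ a : ZMod 2, a + a = 0 := by decide
            exact hz _
          simpa using this
        map_add' := hadd } with hF
    set f : V →ₗ[ZMod 2] ZMod 2 := F.toZModLinearMap 2 with hf
    refine ⟨((LinearMap.BilinForm.toDual B hB).symm f), fun w => ?_⟩
    rw [hsymm]
    have := LinearMap.BilinForm.apply_toDual_symm_apply (B := B) (hB := hB) (f := f) (v := w)
    rw [this]
    rfl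
  constructor
  · intro σ hσ
    obtain ⟨c, hc⟩ := hex σ hσ
    exact ⟨c, hc, fun c' hc' => hsep c' c (fun w => (hc' w).trans (hc w).symm)⟩
  · intro σ τ hσ hτ cσ cτ cστ hcσ hcτ hcστ
    refine (hsep cστ (cσ + σ cτ) fun w => ?_).symm ▸ rfl
    rw [hcστ w]
    have h1 : B w (σ cτ) = q (τ.symm (σ.symm w)) + q (σ.symm w) := by
      have : B w (σ cτ) = B (σ.symm w) cτ := by
        have := hσ (σ.symm w) cτ
        simp at this
        rw [this]
      rw [this, hcτ]
    have h2 : (τ.trans σ).symm w = τ.symm (σ.symm w) := rfl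
    rw [h2, map_add, hcσ, h1]
    have hz : ∀ a b c : ZMod 2, a + c = (b + c) + (a + b) := by decide
    exact hz _ _ _
end

section
/- Let V be a finite-dimensional vector space over F₂ with a nondegenerate alternating bilinear form B and let q be a quadratic refinement of B. Let σ ∈ Sp(V) and v ∈ V satisfy c_q(σ) = σ(v) + v. Let W = V × F₂ × F₂ and let φ : W → W be the linear map φ(z,a,b) = (σ(z) + b·c_q(σ), a + B(c_q(σ), σ(z)), b). Then the fixed subspace of φ satisfies dim_{F₂} W^φ ≡ dim_{F₂} V^σ + B(σ(v), v) (mod 2), where B(σ(v),v) ∈ F₂ is regarded as an integer 0 or 1. -/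
/-- let `σ ∈ Sp(V)` and `v ∈ V` with `c_q(σ) = σ v + v`, and let
`φ : W → W` (`W = V × F₂ × F₂`) be given by
`φ(z,a,b) = (σ z + b·c_q(σ), a + B(c_q σ, σ z), b)`. Then
`dim_{F₂} W^φ ≡ dim_{F₂} V^σ + B(σ v, v) (mod 2)`. -/
theorem stmt5 (V : Type*) [AddCommGroup V] [Module (ZMod 2) V]
    [FiniteDimensional (ZMod 2) V]
    (B : V →ₗ[ZMod 2] V →ₗ[ZMod 2] ZMod 2)
    (hAlt : ∀ v : V, B v v = 0)
    (hNondeg : ∀ v : V, (∀ w : V, B v w = 0) → v = 0)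
    (q : V → ZMod 2)
    (hq : ∀ u w : V, q (u + w) + q u + q w = B u w)
    (σ : V ≃ₗ[ZMod 2] V)
    (hσ : ∀ u w, B (σ u) (σ w) = B u w)
    (cσ : V)
    (hcσ : ∀ w : V, B w cσ = q (σ.symm w) + q w)
    (v : V)
    (hv : cσ = σ v + v)
    (L : (V × ZMod 2 × ZMod 2) →ₗ[ZMod 2] V × ZMod 2 × ZMod 2)
    (hL : ∀ (z : V) (a b : ZMod 2),
      L (z, a, b) = (σ z + b • cσ, a + B cσ (σ z), b)) :
    (Module.finrank (ZMod 2) ↥(LinearMap.ker (L - LinearMap.id)) : ZMod 2)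
      = (Module.finrank (ZMod 2)
          ↥(LinearMap.ker (σ.toLinearMap - LinearMap.id)) : ZMod 2)
        + B (σ v) v := by
  classical
  -- basic char-2 facts
  have hxx : ∀ x : ZMod 2, x + x = 0 := by decide
  have hVxx : ∀ x : V, x + x = 0 := fun x => by
    rw [← two_smul (ZMod 2) x, show ((2:ZMod 2) = 0) from rfl, zero_smul]
  have hcancel : ∀ x y : ZMod 2, x + y = 0 → x = y := by decide
  have hsymm : ∀ u w : V, B u w = B w u := by
    intro u w
    have h := hAlt (u + w)
    simp [map_add, LinearMap.add_apply, hAlt] at h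
    exact (hcancel _ _ h).symm
  have hfix_mem : ∀ z : V, z ∈ LinearMap.ker (σ.toLinearMap - LinearMap.id) ↔ σ z = z := by
    intro z
    simp [LinearMap.mem_ker, LinearMap.sub_apply, sub_eq_zero]
  have hBfix : ∀ z : V, σ z = z → B cσ (σ z) = 0 := by
    intro z hz
    have hsz : σ.symm z = z := by
      have h := σ.symm_apply_apply z; rwa [hz] at h
    rw [hz, hsymm, hcσ, hsz, hxx]
  have hcv : B cσ (σ v) = B (σ v) v := by
    rw [hv, map_add, LinearMap.add_apply, hAlt, zero_add, hsymm]
  set K := LinearMap.ker (L - LinearMap.id) with hK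
  have hmemK : ∀ (z : V) (a b : ZMod 2),
      ((z, a, b) : V × ZMod 2 × ZMod 2) ∈ K ↔ (σ z + b • cσ = z ∧ B cσ (σ z) = 0) := by
    intro z a b
    rw [hK, LinearMap.mem_ker, LinearMap.sub_apply, LinearMap.id_apply, sub_eq_zero, hL,
      Prod.ext_iff, Prod.ext_iff]
    constructor
    · rintro ⟨h1, h2, -⟩
      dsimp only at h1 h2
      exact ⟨h1, add_eq_left.mp h2⟩
    · rintro ⟨h1, h2⟩
      exact ⟨h1, by dsimp only; rw [h2, add_zero], rfl⟩
  -- the projection to the last coordinate, restricted to K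
  set π : K →ₗ[ZMod 2] ZMod 2 :=
    (LinearMap.snd (ZMod 2) (ZMod 2) (ZMod 2)).comp
      ((LinearMap.snd (ZMod 2) V (ZMod 2 × ZMod 2)).comp K.subtype) with hπ
  have hπ_apply : ∀ x : K, π x = (x : V × ZMod 2 × ZMod 2).2.2 := fun x => rfl
  -- the kernel of π is equivalent to V^σ × F₂
  have e : ↥(LinearMap.ker π) ≃ₗ[ZMod 2]
      ↥(LinearMap.ker (σ.toLinearMap - LinearMap.id)) × ZMod 2 :=
    { toFun := fun x => (⟨(x : V × ZMod 2 × ZMod 2).1, by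
        rw [hfix_mem]
        obtain ⟨⟨⟨z, a, b⟩, hzK⟩, hb⟩ := x
        have hb' : b = 0 := hb
        rw [hmemK] at hzK
        have := hzK.1
        rwa [hb', zero_smul, add_zero] at this⟩,
        (x : V × ZMod 2 × ZMod 2).2.1)
      invFun := fun p => ⟨⟨(p.1.1, p.2, 0), by
        rw [hmemK]
        have hfz : σ (p.1.1 : V) = p.1.1 := (hfix_mem _).mp p.1.2
        exact ⟨by rw [zero_smul, add_zero, hfz], hBfix _ hfz⟩⟩, by
        rw [LinearMap.mem_ker]; rfl⟩
      map_add' := fun x y => rfl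
      map_smul' := fun c x => rfl
      left_inv := fun x => by
        obtain ⟨⟨⟨z, a, b⟩, hzK⟩, hb⟩ := x
        have hb' : b = 0 := hb
        apply Subtype.ext; apply Subtype.ext
        simp only
        rw [hb']
      right_inv := fun p => by
        apply Prod.ext
        · apply Subtype.ext; rfl
        · rfl }
  have hkerπ : Module.finrank (ZMod 2) ↥(LinearMap.ker π)
      = Module.finrank (ZMod 2) ↥(LinearMap.ker (σ.toLinearMap - LinearMap.id)) + 1 := by
    rw [e.finrank_eq, Module.finrank_prod, Module.finrank_self]
  have hrn := LinearMap.finrank_range_add_finrank_ker π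
  have h01 : ∀ x : ZMod 2, x = 0 ∨ x = 1 := by decide
  rcases h01 (B (σ v) v) with hB0 | hB1
  · -- B (σ v) v = 0 : π is surjective
    have hmemv : ((v, (0:ZMod 2), (1:ZMod 2)) : V × ZMod 2 × ZMod 2) ∈ K := by
      rw [hmemK]
      constructor
      · rw [one_smul, hv, ← add_assoc, hVxx, zero_add]
      · rw [hcv, hB0]
    have hsurj : Function.Surjective π := by
      intro c
      refine ⟨c • ⟨_, hmemv⟩, ?_⟩
      rw [map_smul, hπ_apply]
      show c • (1 : ZMod 2) = c
      rw [smul_eq_mul, mul_one]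
    have hrange : Module.finrank (ZMod 2) ↥(LinearMap.range π) = 1 := by
      rw [LinearMap.range_eq_top.mpr hsurj, finrank_top, Module.finrank_self]
    rw [hrange, hkerπ] at hrn
    rw [← hrn, hB0, add_zero]
    push_cast
    ring_nf
    rw [show ((2:ZMod 2) = 0) from rfl]
    ring
  · -- B (σ v) v = 1 : π = 0
    have hb0 : ∀ (z : V) (a b : ZMod 2), ((z, a, b) : V × ZMod 2 × ZMod 2) ∈ K → b = 0 := by
      intro z a b hzK
      rw [hmemK] at hzK
      obtain ⟨h1, h2⟩ := hzK
      rcases h01 b with hb | hb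
      · exact hb
      exfalso
      rw [hb, one_smul] at h1
      have hσz : σ z = z + cσ := by
        have h3 := congrArg (· + cσ) h1
        rwa [add_assoc, hVxx, add_zero] at h3
      have hfz : σ (z + v) = z + v := by
        rw [map_add, hσz, hv, add_assoc, add_assoc, add_comm v (σ v), ← add_assoc (σ v),
          hVxx, zero_add]
      have hzv : (z + v) + v = z := by rw [add_assoc, hVxx, add_zero]
      have hz2 : σ z = σ (z + v) + σ v := by rw [← map_add, hzv]
      have : (0 : ZMod 2) = 1 := by
        rw [← h2, hz2, map_add, hBfix _ hfz, hcv, hB1, zero_add]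
      exact absurd this (by decide)
    have hπ0 : π = 0 := by
      ext x
      obtain ⟨⟨z, a, b⟩, hzK⟩ := x
      rw [hπ_apply]
      exact hb0 z a b hzK
    have hrange : Module.finrank (ZMod 2) ↥(LinearMap.range π) = 0 := by
      rw [hπ0, LinearMap.range_zero, finrank_bot]
    rw [hrange, hkerπ, zero_add] at hrn
    rw [← hrn, hB1]
    push_cast
    ring
end

section
/- Let V be a finite-dimensional vector space over F₂ with a nondegenerate alternating bilinear form B, and let q be a quadratic refinement of B. Then every group homomorphism h : Sp(V) → ℤ/2ℤ that vanishes on the orthogonal subgroup O(q) is identically zero. (Consequently, any two functions on Sp(V) with the same coboundary that both restrict on O(q) to the Dickson homomorphism are equal.) -/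
namespace Stmt7Aux

variable {V : Type*} [AddCommGroup V] [Module (ZMod 2) V]
variable (B : V →ₗ[ZMod 2] V →ₗ[ZMod 2] ZMod 2)

lemma z2 (x : ZMod 2) : x = 0 ∨ x = 1 := by revert x; decide

lemma zadd {a b : ZMod 2} (h : a + b = 0) : a = b := by revert h; revert a b; decide

lemma vadd2 (x : V) : x + x = 0 := by
  have h : (2 : ZMod 2) • x = x + x := two_smul _ x
  rw [show (2 : ZMod 2) = 0 by decide, zero_smul] at h
  exact h.symm

lemma addeq {a b : V} (h : a + b = 0) : a = b := by
  have h2 : a + (b + b) = (a + b) + b := (add_assoc a b b).symm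
  rw [vadd2, add_zero, h, zero_add] at h2
  exact h2

lemma swapadd (a b : V) : a + (b + a) = b := by
  rw [add_comm b a, ← add_assoc, vadd2, zero_add]

variable {B} in
lemma bsymm (hAlt : ∀ v : V, B v v = 0) (u w : V) : B u w = B w u := by
  have h := hAlt (u + w)
  simp only [map_add, LinearMap.add_apply, hAlt, zero_add, add_zero] at h
  exact (zadd h).symm

/-- the transvection along `v` as a linear map -/
def tmap (v : V) : V →ₗ[ZMod 2] V := LinearMap.id + (B.flip v).smulRight v

lemma tmap_apply (v x : V) : tmap B v x = x + B x v • v := by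
  simp [tmap, LinearMap.smulRight_apply, LinearMap.flip_apply]

variable {B} in
lemma tmap_invol (hAlt : ∀ v : V, B v v = 0) (v : V) : Function.Involutive (tmap B v) := by
  intro x
  have hbv : B (x + B x v • v) v = B x v := by
    simp [map_add, LinearMap.smul_apply, hAlt]
  rw [tmap_apply, tmap_apply, hbv, add_assoc, ← add_smul,
    show B x v + B x v = 0 from by rcases z2 (B x v) with h | h <;> rw [h] <;> decide]
  simp

variable {B} in
/-- the transvection along `v` as an element of the symplectic group -/
def tvs (hAlt : ∀ v : V, B v v = 0) (v : V) : SympGrp B :=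
  ⟨LinearEquiv.ofInvolutive (tmap B v) (tmap_invol hAlt v), by
    intro u w
    show B (tmap B v u) (tmap B v w) = B u w
    rw [tmap_apply, tmap_apply]
    have hvw : B v w = B w v := bsymm hAlt v w
    rcases z2 (B u v) with h1 | h1 <;> rcases z2 (B w v) with h2 | h2 <;>
      simp [map_add, map_smul, smul_eq_mul, hAlt, hvw, h1, h2] <;>
      (generalize (B u) w = e; revert e; decide)⟩

variable {B} in
lemma tvs_apply (hAlt : ∀ v : V, B v v = 0) (v x : V) :
    (tvs hAlt v).1 x = x + B x v • v := tmap_apply B v x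

variable {B} in
/-- composition in the symplectic group: `comp σ τ = σ ∘ τ`. -/
def comp (σ τ : SympGrp B) : SympGrp B :=
  ⟨τ.1.trans σ.1, fun u w => by
    simp only [LinearEquiv.trans_apply, σ.2, τ.2]⟩

variable {B} in
lemma comp_apply (σ τ : SympGrp B) (x : V) : (comp σ τ).1 x = σ.1 (τ.1 x) := rfl

variable {B} in
/-- inverse in the symplectic group. -/
def invS (σ : SympGrp B) : SympGrp B :=
  ⟨σ.1.symm, fun u w => by
    conv_rhs => rw [← σ.1.apply_symm_apply u, ← σ.1.apply_symm_apply w, σ.2]⟩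

/-- identity -/
def oneS : SympGrp B := ⟨LinearEquiv.refl _ _, fun _ _ => rfl⟩

variable {B} in
/-- transitivity of the symplectic group on nonzero vectors -/
lemma trans_exists (hAlt : ∀ v : V, B v v = 0)
    (hNondeg : ∀ v : V, (∀ w : V, B v w = 0) → v = 0)
    (v w : V) (hv : v ≠ 0) (hw : w ≠ 0) : ∃ τ : SympGrp B, τ.1 w = v := by
  by_cases hvw : v = w
  · exact ⟨oneS B, hvw.symm⟩
  rcases z2 (B v w) with h0 | h1
  · -- find z with B v z = 1 and B w z = 1
    obtain ⟨z₁, hz₁⟩ : ∃ z, B v z = 1 := by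
      by_contra hc; push_neg at hc
      exact hv (hNondeg v fun z => (z2 _).resolve_right (hc z))
    obtain ⟨z₂, hz₂⟩ : ∃ z, B w z = 1 := by
      by_contra hc; push_neg at hc
      exact hw (hNondeg w fun z => (z2 _).resolve_right (hc z))
    obtain ⟨z, hzv, hzw⟩ : ∃ z, B v z = 1 ∧ B w z = 1 := by
      rcases z2 (B w z₁) with a | a
      · rcases z2 (B v z₂) with b | b
        · refine ⟨z₁ + z₂, ?_, ?_⟩
          · rw [map_add, hz₁, b]; decide
          · rw [map_add, a, hz₂]; decide
        · exact ⟨z₂, b, hz₂⟩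
      · exact ⟨z₁, hz₁, a⟩
    refine ⟨comp (tvs hAlt (v + z)) (tvs hAlt (z + w)), ?_⟩
    rw [comp_apply, tvs_apply hAlt (z + w) w]
    have e1 : B w (z + w) = 1 := by
      rw [map_add, hAlt, add_zero]; exact hzw
    rw [e1, one_smul, swapadd, tvs_apply hAlt (v + z) z]
    have e2 : B z (v + z) = 1 := by
      rw [map_add, hAlt, add_zero, bsymm hAlt z v]; exact hzv
    rw [e2, one_smul, swapadd]
  · refine ⟨tvs hAlt (v + w), ?_⟩
    rw [tvs_apply hAlt (v + w) w]
    have e1 : B w (v + w) = 1 := by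
      rw [map_add, hAlt, add_zero, bsymm hAlt w v]; exact h1
    rw [e1, one_smul, swapadd]

variable {B} in
/-- `σ + 1` as a linear map -/
def Dmap (σ : SympGrp B) : V →ₗ[ZMod 2] V := (σ.1 : V →ₗ[ZMod 2] V) + LinearMap.id

variable {B} in
lemma mem_ker_Dmap (σ : SympGrp B) (x : V) :
    x ∈ LinearMap.ker (Dmap σ) ↔ σ.1 x = x := by
  simp only [Dmap, LinearMap.mem_ker, LinearMap.add_apply, LinearMap.id_coe, id_eq,
    LinearEquiv.coe_coe]
  exact ⟨fun e => addeq e, fun e => by rw [e]; exact vadd2 x⟩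

variable {B} in
/-- measure for the induction -/
noncomputable def msr (σ : SympGrp B) : ℕ :=
  Module.finrank (ZMod 2) V - Module.finrank (ZMod 2) (LinearMap.ker (Dmap σ))

variable {B} in
lemma msr_def (σ : SympGrp B) :
    msr σ = Module.finrank (ZMod 2) V - Module.finrank (ZMod 2) (LinearMap.ker (Dmap σ)) := rfl

variable {B} in
/-- the fixed space does not shrink under a transvection along `σ u + u` -/
lemma fix_mono (hAlt : ∀ v : V, B v v = 0) (σ : SympGrp B) (u x : V) (hx : σ.1 x = x) :
    (comp (tvs hAlt (σ.1 u + u)) σ).1 x = x := by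
  rw [comp_apply, hx, tvs_apply]
  have e : B x (σ.1 u + u) = 0 := by
    rw [map_add]
    have : B x (σ.1 u) = B x u := by
      conv_lhs => rw [← hx, σ.2]
    rw [this]
    rcases z2 (B x u) with e | e <;> rw [e] <;> decide
  rw [e, zero_smul, add_zero]

variable {B} in
lemma case1_fix (hAlt : ∀ v : V, B v v = 0) (σ : SympGrp B) (u : V)
    (hu : B u (σ.1 u) = 1) :
    (comp (tvs hAlt (σ.1 u + u)) σ).1 u = u := by
  rw [comp_apply, tvs_apply]
  have e : B (σ.1 u) (σ.1 u + u) = 1 := by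
    rw [map_add, hAlt, zero_add, ← bsymm hAlt u (σ.1 u), hu]
  rw [e, one_smul, ← add_assoc, vadd2, zero_add]

variable {B} in
lemma case1_notfix (hAlt : ∀ v : V, B v v = 0) (σ : SympGrp B) (u : V)
    (hu : B u (σ.1 u) = 1) : σ.1 u ≠ u := by
  intro e
  rw [e, hAlt] at hu
  exact absurd hu (by decide)

variable {B} in
lemma polar (hAlt : ∀ v : V, B v v = 0) (σ : SympGrp B)
    (hall : ∀ y, B y (σ.1 y) = 0) (x y : V) :
    B x (σ.1 y) = B y (σ.1 x) := by
  have h := hall (x + y)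
  rw [map_add] at h
  simp only [map_add, LinearMap.add_apply, hall, zero_add, add_zero] at h
  exact (zadd h).symm

variable {B} in
lemma case2_good (hAlt : ∀ v : V, B v v = 0) (σ : SympGrp B) (u x : V)
    (hall : ∀ y, B y (σ.1 y) = 0) (hx : B x (σ.1 u + u) = 1) :
    B x ((comp (tvs hAlt (σ.1 u + u)) σ).1 x) = 1 := by
  have h1 : B (σ.1 x) (σ.1 u + u) = B x (σ.1 u + u) := by
    rw [map_add, map_add, σ.2 x u, bsymm hAlt (σ.1 x) u, polar hAlt σ hall u x]
    exact add_comm _ _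
  rw [comp_apply, tvs_apply, map_add, map_smul, smul_eq_mul, hall, h1, hx, zero_add, one_mul]

end Stmt7Aux

open Stmt7Aux in
/-- every group homomorphism `h : Sp(V) → ℤ/2ℤ` vanishing on the orthogonal
subgroup `O(q)` of a quadratic refinement `q` of `B` is identically zero. -/
theorem stmt7 (V : Type*) [AddCommGroup V] [Module (ZMod 2) V]
    [FiniteDimensional (ZMod 2) V]
    (B : V →ₗ[ZMod 2] V →ₗ[ZMod 2] ZMod 2)
    (hAlt : ∀ v : V, B v v = 0)
    (hNondeg : ∀ v : V, (∀ w : V, B v w = 0) → v = 0)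
    (q : V → ZMod 2)
    (hq : ∀ u w : V, q (u + w) + q u + q w = B u w)
    (h : SympGrp B → ZMod 2)
    -- `h` is a group homomorphism: `h(στ) = h(σ) + h(τ)`
    (hHom : ∀ σ τ ρ : SympGrp B, ρ.1 = τ.1.trans σ.1 → h ρ = h σ + h τ)
    -- `h` vanishes on `O(q)`
    (hO : ∀ σ : SympGrp B, (∀ x : V, q (σ.1 x) = q x) → h σ = 0) :
    ∀ σ : SympGrp B, h σ = 0 := by
  classical
  -- `h` of the identity is `0`
  have hone : h (oneS B) = 0 := by
    have e := hHom (oneS B) (oneS B) (oneS B) (LinearEquiv.ext fun x => rfl)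
    revert e; generalize h (oneS B) = a; revert a; decide
  have hcomp : ∀ σ τ : SympGrp B, h (comp σ τ) = h σ + h τ := fun σ τ => hHom σ τ _ rfl
  have hinv : ∀ σ : SympGrp B, h (invS σ) = h σ := by
    intro σ
    have e1 : comp σ (invS σ) = oneS B :=
      Subtype.ext (LinearEquiv.ext fun x => σ.1.apply_symm_apply x)
    have e2 := hcomp σ (invS σ)
    rw [e1, hone] at e2
    exact (zadd e2.symm).symm
  -- facts about q
  have hq0 : q 0 = 0 := by
    have e := hq 0 0
    rw [show (0:V) + 0 = 0 from add_zero 0, show B (0:V) 0 = 0 from by simp] at e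
    revert e; generalize q 0 = a; revert a; decide
  have hqadd : ∀ u w, q (u + w) = B u w + q u + q w := by
    intro u w
    have e := hq u w
    revert e
    generalize q (u + w) = a; generalize q u = b; generalize q w = c; generalize B u w = d
    revert a b c d; decide
  -- `h` vanishes on transvections
  have htv : ∀ v : V, v ≠ 0 → h (tvs hAlt v) = 0 := by
    intro v hv
    obtain ⟨w, hw1⟩ : ∃ w, q w = 1 := by
      by_contra hc; push_neg at hc
      have hq0' : ∀ y, q y = 0 := fun y => (z2 _).resolve_right (hc y)
      refine hv (hNondeg v fun z => ?_)
      have e := hq v z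
      rw [hq0', hq0', hq0'] at e
      rw [← e]; decide
    have hw0 : w ≠ 0 := fun e => by rw [e, hq0] at hw1; exact absurd hw1 (by decide)
    obtain ⟨τ, hτ⟩ := trans_exists hAlt hNondeg v w hv hw0
    have hOq : h (tvs hAlt w) = 0 := by
      apply hO
      intro x
      rw [tvs_apply]
      rcases z2 (B x w) with hb | hb
      · rw [hb, zero_smul, add_zero]
      · rw [hb, one_smul, hqadd, hb, hw1]
        generalize q x = a; revert a; decide
    have hconj : tvs hAlt v = comp τ (comp (tvs hAlt w) (invS τ)) := by
      apply Subtype.ext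
      apply LinearEquiv.ext
      intro x
      have hB : B (τ.1.symm x) w = B x v := by
        calc B (τ.1.symm x) w = B (τ.1 (τ.1.symm x)) (τ.1 w) := (τ.2 _ _).symm
          _ = B x v := by rw [τ.1.apply_symm_apply, hτ]
      show (tvs hAlt v).1 x = τ.1 ((tvs hAlt w).1 (τ.1.symm x))
      rw [tvs_apply hAlt v x, tvs_apply hAlt w (τ.1.symm x), map_add, map_smul,
        τ.1.apply_symm_apply, hτ, hB]
    rw [hconj, hcomp, hcomp, hOq, hinv]
    generalize h τ = a; revert a; decide
  -- key step: case 1 reduction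
  have key : ∀ σ : SympGrp B, ∀ u : V, B u (σ.1 u) = 1 →
      msr (comp (tvs hAlt (σ.1 u + u)) σ) < msr σ ∧
        h (comp (tvs hAlt (σ.1 u + u)) σ) = h σ := by
    intro σ u hu
    set σ' := comp (tvs hAlt (σ.1 u + u)) σ with hσ'
    have hnf : σ.1 u ≠ u := case1_notfix hAlt σ u hu
    constructor
    · have hle : LinearMap.ker (Dmap σ) ≤ LinearMap.ker (Dmap σ') := fun x hx =>
        (mem_ker_Dmap σ' x).mpr (fix_mono hAlt σ u x ((mem_ker_Dmap σ x).mp hx))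
      have hlt : LinearMap.ker (Dmap σ) < LinearMap.ker (Dmap σ') := by
        rw [SetLike.lt_iff_le_and_exists]
        exact ⟨hle, u, (mem_ker_Dmap σ' u).mpr (case1_fix hAlt σ u hu),
          fun hmem => hnf ((mem_ker_Dmap σ u).mp hmem)⟩
      have h1 := Submodule.finrank_lt_finrank_of_lt (K := ZMod 2) hlt
      have h2 : Module.finrank (ZMod 2) (LinearMap.ker (Dmap σ')) ≤
          Module.finrank (ZMod 2) V := Submodule.finrank_le _
      rw [msr_def, msr_def]
      omega
    · have hv0 : σ.1 u + u ≠ 0 := fun e => hnf (addeq e)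
      rw [hσ', hcomp, htv _ hv0, zero_add]
  -- fixed case
  have hfixcase : ∀ σ : SympGrp B, (∀ x : V, σ.1 x = x) → h σ = 0 := by
    intro σ hfix
    have : σ = oneS B := Subtype.ext (LinearEquiv.ext fun x => hfix x)
    rw [this]; exact hone
  -- main induction on the measure
  have main : ∀ n : ℕ, ∀ σ : SympGrp B, msr σ ≤ n → h σ = 0 := by
    intro n
    induction n with
    | zero =>
      intro σ hm
      apply hfixcase
      intro x
      have hle : Module.finrank (ZMod 2) (LinearMap.ker (Dmap σ)) ≤
          Module.finrank (ZMod 2) V := Submodule.finrank_le _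
      rw [msr_def] at hm
      have heq : Module.finrank (ZMod 2) (LinearMap.ker (Dmap σ)) =
          Module.finrank (ZMod 2) V := by omega
      have : LinearMap.ker (Dmap σ) = ⊤ := Submodule.eq_top_of_finrank_eq heq
      exact (mem_ker_Dmap σ x).mp (this ▸ Submodule.mem_top)
    | succ n ih =>
      intro σ hm
      by_cases hex : ∃ u, B u (σ.1 u) = 1
      · obtain ⟨u, hu⟩ := hex
        obtain ⟨hlt, heq⟩ := key σ u hu
        rw [← heq]
        exact ih _ (by omega)
      · push_neg at hex
        have hall : ∀ y, B y (σ.1 y) = 0 := fun y => (z2 _).resolve_right (hex y)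
        by_cases hfix : ∀ x, σ.1 x = x
        · exact hfixcase σ hfix
        · push_neg at hfix
          obtain ⟨u, hu⟩ := hfix
          have hw0 : σ.1 u + u ≠ 0 := fun e => hu (addeq e)
          obtain ⟨x, hxw⟩ : ∃ x, B x (σ.1 u + u) = 1 := by
            by_contra hc; push_neg at hc
            refine hw0 (hNondeg _ fun z => ?_)
            have := (z2 (B z (σ.1 u + u))).resolve_right (hc z)
            rw [bsymm hAlt]; exact this
          set σ' := comp (tvs hAlt (σ.1 u + u)) σ with hσ'
          have hgood : B x (σ'.1 x) = 1 := case2_good hAlt σ u x hall hxw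
          have hle2 : msr σ' ≤ msr σ := by
            have hle : LinearMap.ker (Dmap σ) ≤ LinearMap.ker (Dmap σ') := fun y hy =>
              (mem_ker_Dmap σ' y).mpr (fix_mono hAlt σ u y ((mem_ker_Dmap σ y).mp hy))
            have h1 := Submodule.finrank_mono (R := ZMod 2) hle
            rw [msr_def, msr_def]
            omega
          have heq3 : h σ' = h σ := by
            rw [hσ', hcomp, htv _ hw0, zero_add]
          obtain ⟨hlt2, heq2⟩ := key σ' x hgood
          rw [← heq3, ← heq2]
          exact ih _ (by omega)
  intro σ
  exact main (msr σ) σ le_rfl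
end
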